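/- arXiv:2102.06649 — 6 statements merged into one kernel-verified Lean document; each statement's English description precedes it below -/
import Mathlib

section
/- Let H be a Coxeter arrangement in a finite-dimensional real inner product space V, with Coxeter group W generated by the orthogonal reflections in its hyperplanes, and fix a base chamber. Then for every integrable function f : V → ℂ and every w ∈ W, the pizza quantity satisfies P(H, f ∘ w) = det(w) · P(H, f). In particular, if f is invariant under some reflection in W, then P(H, f) = 0. -/
open MeasureTheory
open scoped RealInnerProductSpace

noncomputable section
attribute [local instance] Classical.propDecidable

/-- The hyperplane orthogonal to the unit vector `e`. -/
def hyp {n : ℕ} (e : EuclideanSpace ℝ (Fin n)) : Submodule ℝ (EuclideanSpace ℝ (Fin n)) :=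
  (ℝ ∙ e)ᗮ

def region {n : ℕ} (E : Finset (EuclideanSpace ℝ (Fin n))) (σ : E → Bool) :
    Set (EuclideanSpace ℝ (Fin n)) :=
  {x | ∀ e : E, if σ e then 0 < ⟪(e : EuclideanSpace ℝ (Fin n)), x⟫
       else ⟪(e : EuclideanSpace ℝ (Fin n)), x⟫ < 0}

def chamberSign {n : ℕ} (E : Finset (EuclideanSpace ℝ (Fin n))) (σ : E → Bool) : ℝ :=
  (-1) ^ (Finset.univ.filter (fun e : E => σ e = false)).card

/-- The pizza quantity of an integrable function, base chamber the all-positive region. -/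
def pizzaC {n : ℕ} (E : Finset (EuclideanSpace ℝ (Fin n)))
    (f : EuclideanSpace ℝ (Fin n) → ℂ) : ℂ :=
  ∑ σ : (E → Bool), (chamberSign E σ : ℂ) * ∫ x in region E σ, f x

/-!
An isometry `w` sending every normal in `E` to plus or minus a normal in `E` permutes the
hyperplanes, so it maps chambers onto chambers; since `w` preserves Lebesgue measure,
`P(H, f ∘ w)` is the same alternating sum as `P(H, f)` with the chambers relabelled. Relabelling
multiplies every sign by `(-1) ^ k`, where `k` counts the normals `g` for which `w g` is the
*opposite* of a normal in `E`. For a reflection `s` these normals are paired off by `g ↦ -s g`,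
whose only fixed point among unit normals without opposite pairs is the normal of the mirror of
`s`; so `k` is odd and `P(H, f ∘ s) = -P(H, f) = det s · P(H, f)`.
Finally, the `w` with `P(H, f ∘ w) = det w · P(H, f)` for all `f` form a subgroup, which therefore
contains the group generated by the reflections.
-/

open Finset Submodule

section Reflection

variable {V : Type*} [NormedAddCommGroup V] [InnerProductSpace ℝ V]

theorem Submodule.reflection_orthogonal_span_singleton_eq_neg_iff {e x : V} :
    (ℝ ∙ e)ᗮ.reflection x = -x ↔ x ∈ ℝ ∙ e := by
  rw [reflection_orthogonal_apply, neg_inj, reflection_eq_self_iff]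

theorem eq_or_eq_neg_of_mem_span_singleton {e x : V} (he : e ≠ 0) (hx : x ∈ ℝ ∙ e)
    (hnorm : ‖x‖ = ‖e‖) : x = e ∨ x = -e := by
  obtain ⟨c, rfl⟩ := mem_span_singleton.mp hx
  rw [norm_smul, Real.norm_eq_abs, mul_eq_right₀ (norm_ne_zero_iff.mpr he)] at hnorm
  rcases (abs_eq zero_le_one).mp hnorm with rfl | rfl <;> simp

theorem Submodule.det_reflection_orthogonal_span_singleton [FiniteDimensional ℝ V] {e : V}
    (he : e ≠ 0) : LinearMap.det (ℝ ∙ e)ᗮ.reflection.toLinearMap = -1 := by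
  rw [det_reflection, orthogonal_orthogonal, finrank_span_singleton he, pow_one]

end Reflection

theorem Finset.odd_card_of_involution {α : Type*} [DecidableEq α] {s : Finset α} {a : α}
    (ha : a ∈ s) (g : α → α) (hg_mem : ∀ x ∈ s, g x ∈ s) (hgg : ∀ x ∈ s, g (g x) = x)
    (hga : g a = a) (hfix : ∀ x ∈ s, g x = x → x = a) : Odd #s := by
  have hg_erase : ∀ x ∈ s.erase a, g x ∈ s.erase a := fun x hx => by
    obtain ⟨hxa, hxs⟩ := mem_erase.mp hx
    refine mem_erase.mpr ⟨fun h => hxa ?_, hg_mem x hxs⟩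
    rw [← hgg x hxs, h, hga]
  have heven : ((#(s.erase a) : ℕ) : ZMod 2) = 0 := by
    rw [card_eq_sum_ones, Nat.cast_sum, Nat.cast_one]
    exact sum_involution (fun x _ => g x) (fun _ _ => by decide)
      (fun x hx _ h => (mem_erase.mp hx).1 (hfix x (mem_erase.mp hx).2 h)) hg_erase
      (fun x hx => hgg x (mem_erase.mp hx).2)
  rw [← card_erase_add_one ha]
  exact ((ZMod.natCast_eq_zero_iff_even).mp heven).add_one

section SemiInvariance

variable {V : Type*} [NormedAddCommGroup V] [InnerProductSpace ℝ V]

def LinearIsometryEquiv.detHom : (V ≃ₗᵢ[ℝ] V) →* ℂ :=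
  (Complex.ofRealHom : ℝ →* ℂ).comp <| LinearMap.det.comp
    { toFun := fun w => w.toLinearEquiv.toLinearMap, map_one' := rfl, map_mul' := fun _ _ => rfl }

theorem LinearIsometryEquiv.detHom_apply (w : V ≃ₗᵢ[ℝ] V) :
    detHom w = ((LinearMap.det w.toLinearEquiv.toLinearMap : ℝ) : ℂ) :=
  rfl

def semiInvariantSubgroup (P : (V → ℂ) → ℂ) (χ : (V ≃ₗᵢ[ℝ] V) →* ℂ) :
    Subgroup (V ≃ₗᵢ[ℝ] V) where
  carrier := {w | ∀ f, P (fun x => f (w x)) = χ w * P f}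
  one_mem' f := by simp
  mul_mem' {x y} hx hy f := by
    calc P (fun v => f ((x * y) v)) = χ y * P (fun v => f (x v)) := hy fun v => f (x v)
      _ = χ (x * y) * P f := by rw [hx, map_mul]; ring
  inv_mem' {x} hx f := by
    have h : P f = χ x * P (fun v => f (x⁻¹ v)) := by
      simpa [LinearIsometryEquiv.coe_inv] using hx fun v => f (x⁻¹ v)
    calc P (fun v => f (x⁻¹ v)) = χ x⁻¹ * χ x * P (fun v => f (x⁻¹ v)) := by
          rw [← map_mul, inv_mul_cancel, map_one, one_mul]
      _ = χ x⁻¹ * P f := by rw [mul_assoc, h]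

end SemiInvariance

section Pizza

variable {n : ℕ} {E : Finset (EuclideanSpace ℝ (Fin n))}

theorem chamberSign_eq_prod (σ : E → Bool) :
    chamberSign E σ = ∏ g : E, if σ g then (1 : ℝ) else -1 := by
  rw [chamberSign, prod_ite, prod_const_one, prod_const, one_mul]
  simp

variable (w : EuclideanSpace ℝ (Fin n) ≃ₗᵢ[ℝ] EuclideanSpace ℝ (Fin n))
  (hw : ∀ g ∈ E, w g ∈ E ∨ -w g ∈ E)

def signedImage (g : E) : E :=
  if h : w g ∈ E then ⟨w g, h⟩ else ⟨-w g, (hw g g.2).resolve_left h⟩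

theorem inner_signedImage_apply (g : E) (x : EuclideanSpace ℝ (Fin n)) :
    ⟪(signedImage w hw g : EuclideanSpace ℝ (Fin n)), w x⟫ =
      if w g ∈ E then ⟪(g : EuclideanSpace ℝ (Fin n)), x⟫
      else -⟪(g : EuclideanSpace ℝ (Fin n)), x⟫ := by
  unfold signedImage
  split_ifs <;> simp [inner_neg_left, LinearIsometryEquiv.inner_map_map]

theorem signedImage_eq_or_eq_neg (g : E) :
    (signedImage w hw g : EuclideanSpace ℝ (Fin n)) = w g ∨
      (signedImage w hw g : EuclideanSpace ℝ (Fin n)) = -w g := by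
  unfold signedImage
  split_ifs <;> simp

theorem signedImage_bijective (hopp : ∀ g ∈ E, -g ∉ E) : (signedImage w hw).Bijective := by
  refine Finite.injective_iff_bijective.mp fun g h hgh => ?_
  have hneg {a b : E} (hab : w a = -w b) : False :=
    hopp b b.2 (by rw [← map_neg, w.injective.eq_iff] at hab; exact hab ▸ a.2)
  rcases signedImage_eq_or_eq_neg w hw g with hg | hg <;>
    rcases signedImage_eq_or_eq_neg w hw h with hh | hh <;> rw [hgh, hh] at hg
  · exact Subtype.ext (w.injective hg.symm)
  · exact (hneg hg.symm).elim
  · exact (hneg hg).elim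
  · exact Subtype.ext (w.injective (neg_inj.mp hg).symm)

def preimageSign (τ : E → Bool) (g : E) : Bool :=
  if w g ∈ E then τ (signedImage w hw g) else !τ (signedImage w hw g)

theorem preimage_region (hopp : ∀ g ∈ E, -g ∉ E) (τ : E → Bool) :
    w ⁻¹' region E τ = region E (preimageSign w hw τ) := by
  ext x
  simp only [Set.mem_preimage, region, Set.mem_ofPred_eq]
  rw [(signedImage_bijective w hw hopp).surjective.forall]
  refine forall_congr' fun g => ?_
  rw [inner_signedImage_apply, preimageSign]
  by_cases h : w g ∈ E <;> cases τ (signedImage w hw g) <;> simp [h]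

theorem preimageSign_bijective (hopp : ∀ g ∈ E, -g ∉ E) : (preimageSign w hw).Bijective := by
  refine Finite.injective_iff_bijective.mp fun τ τ' h => ?_
  have hπ := (signedImage_bijective w hw hopp).surjective
  refine funext (hπ.forall.mpr fun g => ?_)
  have hg := congrFun h g
  unfold preimageSign at hg
  split_ifs at hg
  · exact hg
  · exact Bool.not_inj hg

theorem chamberSign_preimageSign (hopp : ∀ g ∈ E, -g ∉ E) (τ : E → Bool) :
    chamberSign E (preimageSign w hw τ) = (-1) ^ #{g ∈ E | w g ∉ E} * chamberSign E τ := by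
  have hfactor (g : E) : (if preimageSign w hw τ g then (1 : ℝ) else -1) =
      (if w g ∈ E then 1 else -1) * (if τ (signedImage w hw g) then 1 else -1) := by
    rw [preimageSign]
    by_cases h : w g ∈ E <;> cases τ (signedImage w hw g) <;> simp [h]
  rw [chamberSign_eq_prod, chamberSign_eq_prod, prod_congr rfl fun g _ => hfactor g,
    prod_mul_distrib, (signedImage_bijective w hw hopp).prod_comp (fun g => if τ g then 1 else -1),
    prod_coe_sort E fun g => if w g ∈ E then (1 : ℝ) else -1, prod_ite, prod_const_one, one_mul,
    prod_const]

end Pizza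

theorem pizzaC_comp_linearIsometryEquiv {n : ℕ} {E : Finset (EuclideanSpace ℝ (Fin n))}
    (w : EuclideanSpace ℝ (Fin n) ≃ₗᵢ[ℝ] EuclideanSpace ℝ (Fin n))
    (hw : ∀ g ∈ E, w g ∈ E ∨ -w g ∈ E) (hopp : ∀ g ∈ E, -g ∉ E)
    (f : EuclideanSpace ℝ (Fin n) → ℂ) :
    pizzaC E (fun x => f (w x)) = (-1) ^ #{g ∈ E | w g ∉ E} * pizzaC E f := by
  have hmeas := w.measurePreserving.setIntegral_preimage_emb w.toHomeomorph.measurableEmbedding f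
  calc pizzaC E (fun x => f (w x))
      = ∑ τ, (chamberSign E (preimageSign w hw τ) : ℂ) *
          ∫ x in region E (preimageSign w hw τ), f (w x) :=
        (Fintype.sum_bijective _ (preimageSign_bijective w hw hopp) _ _ fun _ => rfl).symm
    _ = ∑ τ, (-1) ^ #{g ∈ E | w g ∉ E} * ((chamberSign E τ : ℂ) * ∫ x in region E τ, f x) := by
        refine sum_congr rfl fun τ _ => ?_
        rw [← preimage_region w hw hopp, hmeas, chamberSign_preimageSign w hw hopp]
        push_cast
        ring
    _ = (-1) ^ #{g ∈ E | w g ∉ E} * pizzaC E f := (mul_sum ..).symm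

section Coxeter

variable {n : ℕ} {E : Finset (EuclideanSpace ℝ (Fin n))}

theorem odd_card_filter_reflection_notMem (hunit : ∀ e ∈ E, ‖e‖ = 1) (hopp : ∀ e ∈ E, -e ∉ E)
    (hcox : ∀ e ∈ E, ∀ f ∈ E, (hyp e).reflection f ∈ E ∨ -((hyp e).reflection f) ∈ E)
    {e : EuclideanSpace ℝ (Fin n)} (he : e ∈ E) :
    Odd #{g ∈ E | (hyp e).reflection g ∉ E} := by
  have hse : (hyp e).reflection e = -e := reflection_orthogonalComplement_singleton_eq_neg e
  refine odd_card_of_involution (a := e) ?_ (fun g => -(hyp e).reflection g) ?_ ?_ ?_ ?_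
  · exact mem_filter.mpr ⟨he, hse ▸ hopp e he⟩
  · intro g hg
    obtain ⟨hgE, hsg⟩ := mem_filter.mp hg
    refine mem_filter.mpr ⟨(hcox e he g hgE).resolve_left hsg, ?_⟩
    rw [map_neg, reflection_reflection]
    exact hopp g hgE
  · intro g _
    simp only [map_neg, reflection_reflection, neg_neg]
  · simp only [hse, neg_neg]
  · intro g hg hfix
    obtain ⟨hgE, -⟩ := mem_filter.mp hg
    have hsg : (ℝ ∙ e)ᗮ.reflection g = -g := neg_eq_iff_eq_neg.mp hfix
    have he0 : e ≠ 0 := norm_ne_zero_iff.mp (by simp [hunit e he])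
    rcases eq_or_eq_neg_of_mem_span_singleton he0
      (reflection_orthogonal_span_singleton_eq_neg_iff.mp hsg) (by rw [hunit g hgE, hunit e he])
      with rfl | rfl
    · rfl
    · exact (hopp e he hgE).elim

theorem pizzaC_comp_reflection (hunit : ∀ e ∈ E, ‖e‖ = 1) (hopp : ∀ e ∈ E, -e ∉ E)
    (hcox : ∀ e ∈ E, ∀ f ∈ E, (hyp e).reflection f ∈ E ∨ -((hyp e).reflection f) ∈ E)
    {e : EuclideanSpace ℝ (Fin n)} (he : e ∈ E) (f : EuclideanSpace ℝ (Fin n) → ℂ) :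
    pizzaC E (fun x => f ((hyp e).reflection x)) = -pizzaC E f := by
  rw [pizzaC_comp_linearIsometryEquiv _ (hcox e he) hopp,
    (odd_card_filter_reflection_notMem hunit hopp hcox he).neg_one_pow, neg_one_mul]

end Coxeter

theorem pizza_coxeter_equivariance_general {n : ℕ} (E : Finset (EuclideanSpace ℝ (Fin n)))
    (hunit : ∀ e ∈ E, ‖e‖ = 1) (hopp : ∀ e ∈ E, -e ∉ E)
    (hcox : ∀ e ∈ E, ∀ f ∈ E,
      (hyp e).reflection f ∈ E ∨ -((hyp e).reflection f) ∈ E)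
    (f : EuclideanSpace ℝ (Fin n) → ℂ) :
    (∀ w ∈ Subgroup.closure
        {w : EuclideanSpace ℝ (Fin n) ≃ₗᵢ[ℝ] EuclideanSpace ℝ (Fin n) |
          ∃ e ∈ E, w = (hyp e).reflection},
      pizzaC E (fun x => f (w x)) = ((LinearMap.det ((w : EuclideanSpace ℝ (Fin n) ≃ₗᵢ[ℝ] EuclideanSpace ℝ (Fin n)).toLinearEquiv.toLinearMap) : ℝ) : ℂ) * pizzaC E f) ∧
    ((∃ e ∈ E, ∀ x, f ((hyp e).reflection x) = f x) → pizzaC E f = 0) := by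
  have hW : Subgroup.closure {w | ∃ e ∈ E, w = (hyp e).reflection} ≤
      semiInvariantSubgroup (pizzaC E) LinearIsometryEquiv.detHom := by
    rw [Subgroup.closure_le]
    rintro _ ⟨e, he, rfl⟩ g
    have he0 : e ≠ 0 := norm_ne_zero_iff.mp (by simp [hunit e he])
    have hdet : LinearIsometryEquiv.detHom (hyp e).reflection = -1 := by
      rw [LinearIsometryEquiv.detHom_apply]
      exact_mod_cast det_reflection_orthogonal_span_singleton he0
    rw [pizzaC_comp_reflection hunit hopp hcox he, hdet, neg_one_mul]
  refine ⟨fun w hw => hW hw f, ?_⟩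
  rintro ⟨e, he, hfe⟩
  have h := pizzaC_comp_reflection hunit hopp hcox he f
  simp only [hfe] at h
  exact self_eq_neg.mp h

/-- For a Coxeter arrangement with Coxeter group `W` (the group generated by the orthogonal
reflections in the hyperplanes, assumed finite, with the arrangement closed under these
reflections), the pizza quantity satisfies `P(H, f ∘ w) = det(w) · P(H, f)` for all `w ∈ W`;
in particular if `f` is invariant under some reflection in `W` then `P(H, f) = 0`. -/
theorem pizza_coxeter_equivariance {n : ℕ} (E : Finset (EuclideanSpace ℝ (Fin n)))
    (hunit : ∀ e ∈ E, ‖e‖ = 1) (hopp : ∀ e ∈ E, -e ∉ E)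
    (hcox : ∀ e ∈ E, ∀ f ∈ E,
      (hyp e).reflection f ∈ E ∨ -((hyp e).reflection f) ∈ E)
    (hfin : Finite (Subgroup.closure
      {w : EuclideanSpace ℝ (Fin n) ≃ₗᵢ[ℝ] EuclideanSpace ℝ (Fin n) |
        ∃ e ∈ E, w = (hyp e).reflection}))
    (f : EuclideanSpace ℝ (Fin n) → ℂ) (hf : Integrable f) :
    (∀ w ∈ Subgroup.closure
        {w : EuclideanSpace ℝ (Fin n) ≃ₗᵢ[ℝ] EuclideanSpace ℝ (Fin n) |
          ∃ e ∈ E, w = (hyp e).reflection},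
      pizzaC E (fun x => f (w x)) = ((LinearMap.det ((w : EuclideanSpace ℝ (Fin n) ≃ₗᵢ[ℝ] EuclideanSpace ℝ (Fin n)).toLinearEquiv.toLinearMap) : ℝ) : ℂ) * pizzaC E f) ∧
    ((∃ e ∈ E, ∀ x, f ((hyp e).reflection x) = f x) → pizzaC E f = 0) :=
  pizza_coxeter_equivariance_general E hunit hopp hcox f
end
end

section
/- Let H be a Coxeter arrangement with Coxeter group W in an n-dimensional inner product space V, given by a set E of unit normal vectors. Then the following are equivalent: (b) every sequence of pairwise orthogonal elements of E can be extended to such a sequence of length n; (c) the map −id_V belongs to W. -/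
open scoped RealInnerProductSpace

noncomputable section

namespace CoxAux

variable {n : ℕ}

local notation "V" => EuclideanSpace ℝ (Fin n)

local instance : DecidableEq (EuclideanSpace ℝ (Fin n)) := Classical.decEq _

/-- The reflection in the hyperplane orthogonal to `e`. -/
def sR (e : V) : V ≃ₗᵢ[ℝ] V := Submodule.reflection (hyp e)

lemma sR_apply {e : V} (he : ‖e‖ = 1) (x : V) : sR e x = x - (2 * ⟪e, x⟫) • e := by
  have h1 : sR e x = Submodule.reflection ((ℝ ∙ e) : Submodule ℝ V)ᗮ x := rfl
  rw [h1, Submodule.reflection_orthogonal_apply, Submodule.reflection_apply,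
    Submodule.starProjection_unit_singleton (𝕜 := ℝ) he]
  rw [two_smul, two_mul, add_smul]
  abel

lemma sR_mul_self (e : V) : sR e * sR e = 1 := Submodule.reflection_mul_reflection _

lemma sR_inv (e : V) : (sR e)⁻¹ = sR e := Submodule.reflection_inv

lemma sR_neg (e : V) : sR (-e) = sR e := by
  unfold sR hyp
  congr 2
  rw [show ({-e} : Set V) = -({e} : Set V) by simp, Submodule.span_neg]

lemma sR_self {e : V} (he : ‖e‖ = 1) : sR e e = -e := by
  rw [sR_apply he, real_inner_self_eq_norm_mul_norm, he]
  rw [show (2 : ℝ) * (1 * 1) = 2 by norm_num, two_smul]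
  abel

lemma sR_conj_mul (w : V ≃ₗᵢ[ℝ] V) {e : V} (he : ‖e‖ = 1) :
    sR (w e) * w = w * sR e := by
  ext x
  have hwe : ‖w e‖ = 1 := by rw [w.norm_map]; exact he
  simp only [LinearIsometryEquiv.coe_mul, Function.comp_apply]
  rw [sR_apply hwe, sR_apply he, w.inner_map_map e x, map_sub, map_smul]

/-! ### Products of reflections along a list -/

lemma prod_inv (l : List V) : ((l.map sR).prod)⁻¹ = (l.reverse.map sR).prod := by
  induction l with
  | nil => simp
  | cons a t ih =>
    rw [List.map_cons, List.prod_cons, mul_inv_rev, ih, sR_inv, List.reverse_cons,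
      List.map_append, List.prod_append, List.map_singleton, List.prod_singleton]

lemma inner_list_sum (x : V) (g : V → V) (l : List V) :
    ⟪x, (l.map g).sum⟫ = (l.map fun f => ⟪x, g f⟫).sum := by
  induction l with
  | nil => simp
  | cons a t ih => simp [inner_add_right, ih]

lemma prod_sR_apply : ∀ (l : List V), (∀ e ∈ l, ‖e‖ = 1) →
    (l.Pairwise fun a b => ⟪a, b⟫ = 0) → ∀ x : V,
    (l.map sR).prod x = x - (l.map fun e => (2 * ⟪e, x⟫) • e).sum := by
  intro l
  induction l with
  | nil => intro _ _ x; simp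
  | cons e t ih =>
    intro hu ho x
    rw [List.pairwise_cons] at ho
    have he : ‖e‖ = 1 := hu e (by simp)
    have ht : ∀ f ∈ t, ‖f‖ = 1 := fun f hf => hu f (List.mem_cons_of_mem _ hf)
    rw [List.map_cons, List.prod_cons]
    have happ : (sR e * (t.map sR).prod) x = sR e ((t.map sR).prod x) := rfl
    rw [happ, ih ht ho.2 x, sR_apply he]
    have hinner : ⟪e, (t.map fun f => (2 * ⟪f, x⟫) • f).sum⟫ = 0 := by
      rw [inner_list_sum]
      apply List.sum_eq_zero
      intro y hy
      obtain ⟨f, hf, rfl⟩ := List.mem_map.mp hy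
      rw [real_inner_smul_right, ho.1 f hf, mul_zero]
    rw [inner_sub_right, hinner, sub_zero, List.map_cons, List.sum_cons]
    abel

lemma list_sum_single {l : List V} (hnd : l.Nodup) {a : V} (ha : a ∈ l) (g : V → V)
    (hz : ∀ b ∈ l, b ≠ a → g b = 0) : (l.map g).sum = g a := by
  induction l with
  | nil => simp at ha
  | cons b t ih =>
    rw [List.map_cons, List.sum_cons]
    rcases List.mem_cons.mp ha with rfl | hat
    · have : (t.map g).sum = 0 := by
        apply List.sum_eq_zero
        intro y hy
        obtain ⟨c, hc, rfl⟩ := List.mem_map.mp hy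
        exact hz c (List.mem_cons_of_mem _ hc)
          (fun h => (List.nodup_cons.mp hnd).1 (h ▸ hc))
      rw [this, add_zero]
    · rw [hz b (by simp) (fun h => (List.nodup_cons.mp hnd).1 (h ▸ hat)), zero_add,
        ih (List.nodup_cons.mp hnd).2 hat
          (fun c hc hne => hz c (List.mem_cons_of_mem _ hc) hne)]

/-- products of reflections over a pairwise-orthogonal finset act as `-1` on the span. -/
lemma prod_sR_neg_on_span (S : Finset V) (hu : ∀ e ∈ S, ‖e‖ = 1)
    (ho : ∀ x ∈ S, ∀ y ∈ S, x ≠ y → ⟪x, y⟫ = 0) :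
    ∀ x ∈ Submodule.span ℝ (S : Set V), (S.toList.map sR).prod x = -x := by
  set w := (S.toList.map sR).prod with hw
  have hu' : ∀ e ∈ S.toList, ‖e‖ = 1 := fun e he => hu e (Finset.mem_toList.mp he)
  have ho' : S.toList.Pairwise fun a b => ⟪a, b⟫ = 0 :=
    (S.nodup_toList).pairwise_of_forall_ne
      (fun a ha b hb hab => ho a (Finset.mem_toList.mp ha) b (Finset.mem_toList.mp hb) hab)
  intro x hx
  have hM : x ∈ LinearMap.eqLocus ((w.toLinearEquiv : V →ₗ[ℝ] V)) (-LinearMap.id) := by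
    refine Submodule.span_le.mpr ?_ hx
    intro s hs
    have hs' : s ∈ S := hs
    have : w s = -s := by
      rw [hw, prod_sR_apply S.toList hu' ho' s]
      have : (S.toList.map fun e => (2 * ⟪e, s⟫) • e).sum = (2 * ⟪s, s⟫) • s := by
        apply list_sum_single S.nodup_toList (Finset.mem_toList.mpr hs') _
        intro b hb hbs
        rw [ho b (Finset.mem_toList.mp hb) s hs' hbs, mul_zero, zero_smul]
      rw [this, real_inner_self_eq_norm_mul_norm, hu s hs']
      rw [show (2 : ℝ) * (1 * 1) = 2 by norm_num, two_smul]
      abel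
    simpa [LinearMap.mem_eqLocus] using this
  simpa [LinearMap.mem_eqLocus] using hM

lemma prod_sR_fix_of_orth (S : Finset V) {x : V}
    (horth : ∀ e ∈ S.toList, ⟪e, x⟫ = 0) (hu : ∀ e ∈ S.toList, ‖e‖ = 1)
    (ho : S.toList.Pairwise fun a b => ⟪a, b⟫ = 0) :
    (S.toList.map sR).prod x = x := by
  rw [prod_sR_apply S.toList hu ho x]
  have : (S.toList.map fun e => (2 * ⟪e, x⟫) • e).sum = 0 := by
    apply List.sum_eq_zero
    intro y hy
    obtain ⟨f, hf, rfl⟩ := List.mem_map.mp hy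
    rw [horth f hf, mul_zero, zero_smul]
  rw [this, sub_zero]

/-! ### Root system setup -/

structure Setup (n : ℕ) where
  Φ : Finset (EuclideanSpace ℝ (Fin n))
  p : EuclideanSpace ℝ (Fin n)
  unit : ∀ α ∈ Φ, ‖α‖ = 1
  negmem : ∀ α ∈ Φ, -α ∈ Φ
  reflmem : ∀ α ∈ Φ, ∀ β ∈ Φ, sR α β ∈ Φ
  reg : ∀ α ∈ Φ, ⟪α, p⟫ ≠ 0

namespace Setup

variable (C : Setup n)

def Pos : Finset V := C.Φ.filter fun α => 0 < ⟪α, C.p⟫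

lemma pos_sub : C.Pos ⊆ C.Φ := Finset.filter_subset _ _

lemma pos_inner {α : V} (h : α ∈ C.Pos) : 0 < ⟪α, C.p⟫ := (Finset.mem_filter.mp h).2

lemma pos_unit {α : V} (h : α ∈ C.Pos) : ‖α‖ = 1 := C.unit α (C.pos_sub h)

lemma mem_pos_of {α : V} (hΦ : α ∈ C.Φ) (h : 0 < ⟪α, C.p⟫) : α ∈ C.Pos :=
  Finset.mem_filter.mpr ⟨hΦ, h⟩

lemma pos_or_neg {α : V} (h : α ∈ C.Φ) : α ∈ C.Pos ∨ -α ∈ C.Pos := by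
  rcases lt_or_gt_of_ne (C.reg α h) with hneg | hpos
  · right
    refine C.mem_pos_of (C.negmem α h) ?_
    rw [inner_neg_left]; linarith
  · left; exact C.mem_pos_of h hpos

lemma listprod_mem : ∀ (l : List V), (∀ γ ∈ l, γ ∈ C.Φ) →
    ∀ α ∈ C.Φ, (l.map sR).prod α ∈ C.Φ := by
  intro l
  induction l with
  | nil => intro _ α hα; simpa using hα
  | cons γ t ih =>
    intro hl α hα
    rw [List.map_cons, List.prod_cons]
    have : (sR γ * (t.map sR).prod) α = sR γ ((t.map sR).prod α) := rfl
    rw [this]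
    exact C.reflmem γ (hl γ (by simp)) _
      (ih (fun c hc => hl c (List.mem_cons_of_mem _ hc)) α hα)

end Setup

/-- nonnegative cone over a finset -/
def coneOf (Δ : Finset V) (x : V) : Prop :=
  ∃ c : V → ℝ, (∀ v ∈ Δ, 0 ≤ c v) ∧ ∑ v ∈ Δ, c v • v = x

lemma sum_single_smul (s : Finset V) {a : V} (ha : a ∈ s) (t : ℝ) :
    ∑ v ∈ s, (if v = a then t else 0) • v = t • a := by
  rw [Finset.sum_eq_single_of_mem a ha]
  · simp
  · intro b _ hne; simp [hne]

lemma coneOf_self {Δ : Finset V} {α : V} (h : α ∈ Δ) : coneOf Δ α := by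
  refine ⟨fun v => if v = α then 1 else 0, fun v _ => by positivity, ?_⟩
  rw [sum_single_smul Δ h 1, one_smul]

lemma coneOf_trans {Δ : Finset V} {β x : V} (hβ : β ∈ Δ)
    (hx : coneOf Δ x) (hb : coneOf (Δ.erase β) β) : coneOf (Δ.erase β) x := by
  obtain ⟨c, hc, hcs⟩ := hx
  obtain ⟨d, hd, hds⟩ := hb
  refine ⟨fun v => c v + c β * d v, fun v hv => by
    have := hc v (Finset.mem_of_mem_erase hv)
    have := hd v hv
    have := hc β hβ
    positivity, ?_⟩
  have hsplit : ∑ v ∈ Δ, c v • v = c β • β + ∑ v ∈ Δ.erase β, c v • v :=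
    (Finset.add_sum_erase Δ (fun v => c v • v) hβ).symm
  calc ∑ v ∈ Δ.erase β, (c v + c β * d v) • v
      = ∑ v ∈ Δ.erase β, c v • v + ∑ v ∈ Δ.erase β, (c β * d v) • v := by
        rw [← Finset.sum_add_distrib]; congr 1; ext v; rw [add_smul]
    _ = ∑ v ∈ Δ.erase β, c v • v + c β • β := by
        congr 1
        have : c β • β = c β • ∑ v ∈ Δ.erase β, d v • v := by rw [hds]
        rw [this, Finset.smul_sum]
        congr 1; ext v; rw [smul_smul]
    _ = x := by rw [← hcs, hsplit]; abel

structure Simple (C : Setup n) where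
  Δ : Finset V
  sub : Δ ⊆ C.Pos
  conePos : ∀ α ∈ C.Pos, coneOf Δ α
  min : ∀ Δ' : Finset V, Δ' ⊆ C.Pos → (∀ α ∈ C.Pos, coneOf Δ' α) → Δ.card ≤ Δ'.card

lemma exists_simple (C : Setup n) : Nonempty (Simple C) := by
  set s : Set ℕ := {k | ∃ Δ' : Finset V, Δ' ⊆ C.Pos ∧ (∀ α ∈ C.Pos, coneOf Δ' α)
    ∧ Δ'.card = k} with hs
  have hne : C.Pos.card ∈ s :=
    ⟨C.Pos, Finset.Subset.refl _, fun α hα => coneOf_self hα, rfl⟩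
  obtain ⟨Δ, hsub, hcone, hcard⟩ := Nat.sInf_mem (⟨_, hne⟩ : s.Nonempty)
  refine ⟨⟨Δ, hsub, hcone, ?_⟩⟩
  intro Δ' hsub' hcone'
  rw [hcard]
  exact Nat.sInf_le ⟨Δ', hsub', hcone', rfl⟩

namespace Simple

variable {C : Setup n} (D : Simple C)

lemma mem_pos {α : V} (h : α ∈ D.Δ) : α ∈ C.Pos := D.sub h

lemma not_cone_erase {β : V} (hβ : β ∈ D.Δ) : ¬ coneOf (D.Δ.erase β) β := by
  intro h
  have hall : ∀ α ∈ C.Pos, coneOf (D.Δ.erase β) α :=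
    fun α hα => coneOf_trans hβ (D.conePos α hα) h
  have hle := D.min (D.Δ.erase β) (fun v hv => D.sub (Finset.mem_of_mem_erase hv)) hall
  have := Finset.card_erase_lt_of_mem hβ
  omega

lemma hlp {α β : V} (hα : α ∈ D.Δ) (hβ : β ∈ D.Δ) (hne : α ≠ β) {c : ℝ} (hc : 0 < c)
    {d : V → ℝ} (hd : ∀ μ ∈ D.Δ, 0 ≤ d μ)
    (heq : β = c • α + ∑ μ ∈ D.Δ, d μ • μ) : False := by
  have hαp : 0 < ⟪α, C.p⟫ := C.pos_inner (D.mem_pos hα)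
  have hβp : 0 < ⟪β, C.p⟫ := C.pos_inner (D.mem_pos hβ)
  rcases lt_or_ge (d β) 1 with hdβ | hdβ
  · apply D.not_cone_erase hβ
    have hαe : α ∈ D.Δ.erase β := Finset.mem_erase.mpr ⟨hne, hα⟩
    have hpos : (0:ℝ) < 1 - d β := by linarith
    refine ⟨fun μ => (1 - d β)⁻¹ * (d μ + if μ = α then c else 0), ?_, ?_⟩
    · intro v hv
      have h1 := hd v (Finset.mem_of_mem_erase hv)
      have h2 : (0:ℝ) ≤ if v = α then c else 0 := by
        split
        · exact le_of_lt hc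
        · exact le_refl 0
      exact mul_nonneg (le_of_lt (inv_pos.mpr hpos)) (add_nonneg h1 h2)
    · have h0 : ∑ μ ∈ D.Δ, d μ • μ = β - c • α := by rw [heq]; abel
      have hsplit : ∑ μ ∈ D.Δ, d μ • μ = d β • β + ∑ μ ∈ D.Δ.erase β, d μ • μ :=
        (Finset.add_sum_erase D.Δ (fun μ => d μ • μ) hβ).symm
      have hkey : ∑ μ ∈ D.Δ.erase β, d μ • μ + c • α = (1 - d β) • β := by
        have h1 : ∑ μ ∈ D.Δ.erase β, d μ • μ = β - c • α - d β • β := by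
          rw [← h0, hsplit]; abel
        rw [h1, sub_smul, one_smul]; abel
      calc ∑ μ ∈ D.Δ.erase β, ((1 - d β)⁻¹ * (d μ + if μ = α then c else 0)) • μ
          = (1 - d β)⁻¹ • ∑ μ ∈ D.Δ.erase β, (d μ + if μ = α then c else 0) • μ := by
            rw [Finset.smul_sum]; congr 1; ext μ; rw [smul_smul]
        _ = (1 - d β)⁻¹ • (∑ μ ∈ D.Δ.erase β, d μ • μ + c • α) := by
            congr 1
            rw [← sum_single_smul (D.Δ.erase β) hαe c, ← Finset.sum_add_distrib]
            congr 1; ext μ; rw [add_smul]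
        _ = (1 - d β)⁻¹ • ((1 - d β) • β) := by rw [hkey]
        _ = β := by rw [smul_smul, inv_mul_cancel₀ (ne_of_gt hpos), one_smul]
  · have hip : ⟪β, C.p⟫ = c * ⟪α, C.p⟫ + ∑ μ ∈ D.Δ, d μ * ⟪μ, C.p⟫ := by
      conv_lhs => rw [heq]
      rw [inner_add_left, real_inner_smul_left, sum_inner]
      congr 1
      exact Finset.sum_congr rfl fun μ _ => real_inner_smul_left _ _ _
    have hterm : ∀ μ ∈ D.Δ, 0 ≤ d μ * ⟪μ, C.p⟫ := fun μ hμ =>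
      mul_nonneg (hd μ hμ) (le_of_lt (C.pos_inner (D.mem_pos hμ)))
    have hsingle : d β * ⟪β, C.p⟫ ≤ ∑ μ ∈ D.Δ, d μ * ⟪μ, C.p⟫ :=
      Finset.single_le_sum hterm hβ
    have h2 : ⟪β, C.p⟫ ≤ d β * ⟪β, C.p⟫ := le_mul_of_one_le_left (le_of_lt hβp) hdβ
    nlinarith [mul_pos hc hαp]

lemma obtuse {α β : V} (hα : α ∈ D.Δ) (hβ : β ∈ D.Δ) (hne : α ≠ β) : ⟪α, β⟫ ≤ 0 := by
  by_contra hpos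
  push_neg at hpos
  have hαu : ‖α‖ = 1 := C.pos_unit (D.mem_pos hα)
  have hγΦ : sR α β ∈ C.Φ := C.reflmem α (C.pos_sub (D.mem_pos hα)) β (C.pos_sub (D.mem_pos hβ))
  have hγ : sR α β = β - (2 * ⟪α, β⟫) • α := sR_apply hαu β
  have hc : (0:ℝ) < 2 * ⟪α, β⟫ := by linarith
  rcases C.pos_or_neg hγΦ with h | h
  · obtain ⟨d, hd, hds⟩ := D.conePos _ h
    exact D.hlp hα hβ hne hc hd (by rw [hds, hγ]; abel)
  · obtain ⟨d, hd, hds⟩ := D.conePos _ h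
    have h1 : (2 * ⟪α, β⟫) • α = β + ∑ μ ∈ D.Δ, d μ • μ := by
      rw [hds, hγ]; abel
    refine D.hlp hβ hα hne.symm (inv_pos.mpr hc)
      (d := fun μ => (2 * ⟪α, β⟫)⁻¹ * d μ)
      (fun μ hμ => mul_nonneg (le_of_lt (inv_pos.mpr hc)) (hd μ hμ)) ?_
    calc α = (2 * ⟪α, β⟫)⁻¹ • ((2 * ⟪α, β⟫) • α) := by
          rw [smul_smul, inv_mul_cancel₀ (ne_of_gt hc), one_smul]
      _ = (2 * ⟪α, β⟫)⁻¹ • (β + ∑ μ ∈ D.Δ, d μ • μ) := by rw [h1]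
      _ = (2 * ⟪α, β⟫)⁻¹ • β + ∑ μ ∈ D.Δ, ((2 * ⟪α, β⟫)⁻¹ * d μ) • μ := by
          rw [smul_add, Finset.smul_sum]; congr 1
          exact Finset.sum_congr rfl fun μ _ => smul_smul _ _ _

lemma indep {r : V → ℝ} (h0 : ∑ μ ∈ D.Δ, r μ • μ = 0) : ∀ μ ∈ D.Δ, r μ = 0 := by
  set P := D.Δ.filter (fun μ => 0 ≤ r μ) with hP
  set N := D.Δ.filter (fun μ => ¬ 0 ≤ r μ) with hN
  have hsplit : ∑ μ ∈ P, r μ • μ + ∑ μ ∈ N, r μ • μ = 0 := by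
    rw [hP, hN, Finset.sum_filter_add_sum_filter_not]; exact h0
  have hv : ∑ μ ∈ P, r μ • μ = ∑ ν ∈ N, (-(r ν)) • ν := by
    have h1 : ∑ μ ∈ P, r μ • μ = -∑ ν ∈ N, r ν • ν := eq_neg_of_add_eq_zero_left hsplit
    rw [h1, ← Finset.sum_neg_distrib]
    exact Finset.sum_congr rfl fun ν _ => (neg_smul _ _).symm
  have hvv : ⟪(∑ μ ∈ P, r μ • μ : V), ∑ μ ∈ P, r μ • μ⟫ ≤ 0 := by
    nth_rewrite 2 [hv]
    rw [sum_inner]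
    apply Finset.sum_nonpos
    intro μ hμ
    rw [real_inner_smul_left, inner_sum]
    have hrμ : 0 ≤ r μ := (Finset.mem_filter.mp hμ).2
    apply mul_nonpos_of_nonneg_of_nonpos hrμ
    apply Finset.sum_nonpos
    intro ν hν
    rw [real_inner_smul_right]
    have hrν : ¬ 0 ≤ r ν := (Finset.mem_filter.mp hν).2
    have hneg : 0 ≤ -(r ν) := by push_neg at hrν; linarith
    apply mul_nonpos_of_nonneg_of_nonpos hneg
    refine D.obtuse (Finset.mem_of_mem_filter μ hμ) (Finset.mem_of_mem_filter ν hν) ?_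
    intro hμν
    exact hrν (hμν ▸ hrμ)
  have hv0 : (∑ μ ∈ P, r μ • μ : V) = 0 := by
    have hnn := real_inner_self_nonneg (x := (∑ μ ∈ P, r μ • μ : V))
    exact inner_self_eq_zero.mp (le_antisymm hvv hnn)
  have hN0 : (∑ ν ∈ N, (-(r ν)) • ν : V) = 0 := by rw [← hv]; exact hv0
  have hPzero : ∀ μ ∈ P, r μ * ⟪μ, C.p⟫ = 0 := by
    have hs : ∑ μ ∈ P, r μ * ⟪μ, C.p⟫ = 0 := by
      have h2 : ⟪(∑ μ ∈ P, r μ • μ : V), C.p⟫ = 0 := by rw [hv0, inner_zero_left]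
      rw [sum_inner] at h2
      have h3 : ∑ μ ∈ P, r μ * ⟪μ, C.p⟫ = ∑ μ ∈ P, ⟪r μ • μ, C.p⟫ :=
        Finset.sum_congr rfl fun μ _ => (real_inner_smul_left _ _ _).symm
      rw [h3]; exact h2
    refine (Finset.sum_eq_zero_iff_of_nonneg ?_).mp hs
    intro μ hμ
    exact mul_nonneg (Finset.mem_filter.mp hμ).2
      (le_of_lt (C.pos_inner (D.mem_pos (Finset.mem_of_mem_filter μ hμ))))
  have hNzero : ∀ ν ∈ N, -(r ν) * ⟪ν, C.p⟫ = 0 := by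
    have hs : ∑ ν ∈ N, -(r ν) * ⟪ν, C.p⟫ = 0 := by
      have h2 : ⟪(∑ ν ∈ N, (-(r ν)) • ν : V), C.p⟫ = 0 := by rw [hN0, inner_zero_left]
      rw [sum_inner] at h2
      have h3 : ∑ ν ∈ N, -(r ν) * ⟪ν, C.p⟫ = ∑ ν ∈ N, ⟪(-(r ν)) • ν, C.p⟫ :=
        Finset.sum_congr rfl fun ν _ => (real_inner_smul_left _ _ _).symm
      rw [h3]; exact h2
    refine (Finset.sum_eq_zero_iff_of_nonneg ?_).mp hs
    intro ν hν
    have hrν : ¬ 0 ≤ r ν := (Finset.mem_filter.mp hν).2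
    refine mul_nonneg (by push_neg at hrν; linarith)
      (le_of_lt (C.pos_inner (D.mem_pos (Finset.mem_of_mem_filter ν hν))))
  intro μ hμ
  by_cases hr : 0 ≤ r μ
  · have h2 := hPzero μ (Finset.mem_filter.mpr ⟨hμ, hr⟩)
    rcases mul_eq_zero.mp h2 with h | h
    · exact h
    · exact absurd h (C.reg μ (C.pos_sub (D.mem_pos hμ)))
  · have h2 := hNzero μ (Finset.mem_filter.mpr ⟨hμ, hr⟩)
    rcases mul_eq_zero.mp h2 with h | h
    · linarith [neg_eq_zero.mp h]
    · exact absurd h (C.reg μ (C.pos_sub (D.mem_pos hμ)))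

lemma refl_pos {δ α : V} (hδ : δ ∈ D.Δ) (hα : α ∈ C.Pos) (hne : α ≠ δ) :
    sR δ α ∈ C.Pos := by
  have hδu : ‖δ‖ = 1 := C.pos_unit (D.mem_pos hδ)
  have hβΦ : sR δ α ∈ C.Φ := C.reflmem δ (C.pos_sub (D.mem_pos hδ)) α (C.pos_sub hα)
  rcases C.pos_or_neg hβΦ with h | h
  · exact h
  · exfalso
    obtain ⟨c, hc, hcs⟩ := D.conePos α hα
    obtain ⟨d, hd, hds⟩ := D.conePos _ h
    have hβ : sR δ α = α - (2 * ⟪δ, α⟫) • δ := sR_apply hδu α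
    have hsum : ∑ μ ∈ D.Δ, (c μ + d μ - if μ = δ then 2 * ⟪δ, α⟫ else 0) • μ = 0 := by
      have hexp : ∀ μ ∈ D.Δ, (c μ + d μ - if μ = δ then 2 * ⟪δ, α⟫ else 0) • μ
          = c μ • μ + d μ • μ - (if μ = δ then 2 * ⟪δ, α⟫ else 0) • μ := by
        intro μ _; rw [sub_smul, add_smul]
      rw [Finset.sum_congr rfl hexp, Finset.sum_sub_distrib, Finset.sum_add_distrib,
        hcs, hds, sum_single_smul D.Δ hδ, hβ]
      abel
    have hz := D.indep hsum
    have hcs' : α = c δ • δ := by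
      rw [← hcs, Finset.sum_eq_single_of_mem δ hδ]
      intro b hb hbδ
      have h1 := hz b hb
      rw [if_neg hbδ, sub_zero] at h1
      have h2 := hc b hb
      have h3 := hd b hb
      have : c b = 0 := by linarith
      rw [this, zero_smul]
    have hαu : ‖α‖ = 1 := C.pos_unit hα
    rw [hcs', norm_smul, hδu, mul_one] at hαu
    have h3 : c δ = 1 := by
      rw [Real.norm_eq_abs, abs_of_nonneg (hc δ hδ)] at hαu
      exact hαu
    exact hne (by rw [hcs', h3, one_smul])

lemma gen : ∀ α ∈ C.Pos, ∃ l : List V, (∀ γ ∈ l, γ ∈ D.Δ) ∧ (l.map sR).prod = sR α := by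
  have main : ∀ k : ℕ, ∀ α ∈ C.Pos,
      (C.Pos.filter fun γ => ⟪γ, C.p⟫ < ⟪α, C.p⟫).card = k →
      ∃ l : List V, (∀ γ ∈ l, γ ∈ D.Δ) ∧ (l.map sR).prod = sR α := by
    intro k
    induction k using Nat.strong_induction_on with
    | _ k IH =>
      intro α hα hcard
      by_cases hαΔ : α ∈ D.Δ
      · exact ⟨[α], fun γ hγ => by rw [List.mem_singleton.mp hγ]; exact hαΔ, by simp⟩
      · obtain ⟨c, hc, hcs⟩ := D.conePos α hα
        have hαα : ⟪α, α⟫ = 1 := by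
          rw [real_inner_self_eq_norm_mul_norm, C.pos_unit hα]; norm_num
        have hsum : ∑ μ ∈ D.Δ, c μ * ⟪α, μ⟫ = 1 := by
          have h1 : ⟪α, (∑ v ∈ D.Δ, c v • v : V)⟫ = 1 := by rw [hcs, hαα]
          rw [inner_sum] at h1
          rw [← h1]
          exact Finset.sum_congr rfl fun μ _ => (real_inner_smul_right _ _ _).symm
        have hex : ∃ μ ∈ D.Δ, 0 < c μ * ⟪α, μ⟫ := by
          by_contra hno
          push_neg at hno
          have := Finset.sum_nonpos hno
          rw [hsum] at this
          linarith
        obtain ⟨μ, hμ, hcμ⟩ := hex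
        have hαμ : 0 < ⟪α, μ⟫ := by
          by_contra hle
          push_neg at hle
          exact absurd hcμ (not_lt.mpr (mul_nonpos_of_nonneg_of_nonpos (hc μ hμ) hle))
        have hneμ : α ≠ μ := fun h => hαΔ (h ▸ hμ)
        have hβPos : sR μ α ∈ C.Pos := D.refl_pos hμ hα hneμ
        have hμu : ‖μ‖ = 1 := C.pos_unit (D.mem_pos hμ)
        have hβval : ⟪sR μ α, C.p⟫ = ⟪α, C.p⟫ - 2 * ⟪μ, α⟫ * ⟪μ, C.p⟫ := by
          rw [sR_apply hμu, inner_sub_left, real_inner_smul_left]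
        have hμα : 0 < ⟪μ, α⟫ := by rw [real_inner_comm]; exact hαμ
        have hlt : ⟪sR μ α, C.p⟫ < ⟪α, C.p⟫ := by
          rw [hβval]
          nlinarith [C.pos_inner (D.mem_pos hμ)]
        have hss : (C.Pos.filter fun γ => ⟪γ, C.p⟫ < ⟪sR μ α, C.p⟫)
            ⊂ (C.Pos.filter fun γ => ⟪γ, C.p⟫ < ⟪α, C.p⟫) := by
          have hsub : (C.Pos.filter fun γ => ⟪γ, C.p⟫ < ⟪sR μ α, C.p⟫)
              ⊆ (C.Pos.filter fun γ => ⟪γ, C.p⟫ < ⟪α, C.p⟫) := by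
            intro x hx
            rw [Finset.mem_filter] at hx ⊢
            exact ⟨hx.1, lt_trans hx.2 hlt⟩
          refine (Finset.ssubset_iff_of_subset hsub).mpr ?_
          exact ⟨sR μ α, Finset.mem_filter.mpr ⟨hβPos, hlt⟩,
            fun hmem => lt_irrefl _ (Finset.mem_filter.mp hmem).2⟩
        have hclt := Finset.card_lt_card hss
        rw [hcard] at hclt
        obtain ⟨l, hl, hlprod⟩ := IH _ hclt (sR μ α) hβPos rfl
        refine ⟨μ :: (l ++ [μ]), ?_, ?_⟩
        · intro γ hγ
          rcases List.mem_cons.mp hγ with rfl | hγ'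
          · exact hμ
          · rcases List.mem_append.mp hγ' with h | h
            · exact hl γ h
            · rw [List.mem_singleton.mp h]; exact hμ
        · rw [List.map_cons, List.prod_cons, List.map_append, List.prod_append, hlprod,
            List.map_singleton, List.prod_singleton]
          have hinv : sR μ (sR μ α) = α := Submodule.reflection_reflection _ α
          have hconj : sR (sR μ (sR μ α)) * sR μ = sR μ * sR (sR μ α) :=
            sR_conj_mul (sR μ) (C.pos_unit hβPos)
          rw [hinv] at hconj
          rw [← mul_assoc, ← hconj, mul_assoc, sR_mul_self, mul_one]
  intro α hα
  exact main _ α hα rfl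

lemma exchange : ∀ L : List V, (∀ γ ∈ L, γ ∈ D.Δ) → ∀ δ ∈ D.Δ,
    ⟪(L.map sR).prod δ, C.p⟫ < 0 →
    ∃ M : List V, (∀ γ ∈ M, γ ∈ D.Δ) ∧ M.length + 1 = L.length ∧
      (M.map sR).prod = (L.map sR).prod * sR δ := by
  intro L
  induction L with
  | nil =>
    intro _ δ hδ hneg
    exfalso
    simp only [List.map_nil, List.prod_nil, LinearIsometryEquiv.coe_one, id_eq] at hneg
    linarith [C.pos_inner (D.mem_pos hδ)]
  | cons γ T ih =>
    intro hL δ hδ hneg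
    have hγ : γ ∈ D.Δ := hL γ (by simp)
    have hT : ∀ x ∈ T, x ∈ D.Δ := fun x hx => hL x (List.mem_cons_of_mem _ hx)
    have happ : ((γ :: T).map sR).prod δ = sR γ ((T.map sR).prod δ) := by
      rw [List.map_cons, List.prod_cons]; rfl
    by_cases hvδ : ⟪(T.map sR).prod δ, C.p⟫ < 0
    · obtain ⟨M, hM, hlen, hprod⟩ := ih hT δ hδ hvδ
      refine ⟨γ :: M, ?_, ?_, ?_⟩
      · intro x hx
        rcases List.mem_cons.mp hx with rfl | h
        · exact hγ
        · exact hM x h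
      · simp only [List.length_cons]; omega
      · rw [List.map_cons, List.prod_cons, hprod, List.map_cons, List.prod_cons, mul_assoc]
    · have hvΦ : (T.map sR).prod δ ∈ C.Φ :=
        C.listprod_mem T (fun x hx => C.pos_sub (D.mem_pos (hT x hx))) δ
          (C.pos_sub (D.mem_pos hδ))
      have hvpos : (T.map sR).prod δ ∈ C.Pos :=
        C.mem_pos_of hvΦ (lt_of_le_of_ne (not_lt.mp hvδ) (Ne.symm (C.reg _ hvΦ)))
      have heq : (T.map sR).prod δ = γ := by
        by_contra hne
        have h1 := C.pos_inner (D.refl_pos hγ hvpos hne)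
        rw [happ] at hneg
        linarith
      have hδu : ‖δ‖ = 1 := C.pos_unit (D.mem_pos hδ)
      have hconj : sR ((T.map sR).prod δ) * (T.map sR).prod
          = (T.map sR).prod * sR δ := sR_conj_mul _ hδu
      refine ⟨T, hT, by simp, ?_⟩
      rw [List.map_cons, List.prod_cons]
      calc (T.map sR).prod = (T.map sR).prod * (sR δ * sR δ) := by
            rw [sR_mul_self, mul_one]
        _ = ((T.map sR).prod * sR δ) * sR δ := by rw [mul_assoc]
        _ = (sR γ * (T.map sR).prod) * sR δ := by rw [← hconj, heq]

lemma eq_one_of_pos_stable : ∀ (k : ℕ) (l : List V), l.length ≤ k →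
    (∀ γ ∈ l, γ ∈ D.Δ) → (∀ α ∈ C.Pos, (l.map sR).prod α ∈ C.Pos) →
    (l.map sR).prod = 1 := by
  intro k
  induction k with
  | zero =>
    intro l hl _ _
    rw [List.eq_nil_of_length_eq_zero (Nat.le_zero.mp hl)]
    simp
  | succ k IH =>
    intro l hlen hl hstab
    rcases List.eq_nil_or_concat l with rfl | ⟨L, δ, rfl⟩
    · simp
    · rw [List.concat_eq_append] at hlen hl hstab ⊢
      have hδ : δ ∈ D.Δ := hl δ (by simp)
      have hL : ∀ γ ∈ L, γ ∈ D.Δ := fun γ hγ => hl γ (by simp [hγ])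
      have hw : ((L ++ [δ]).map sR).prod = (L.map sR).prod * sR δ := by
        rw [List.map_append, List.prod_append, List.map_singleton, List.prod_singleton]
      have hwδ : ((L ++ [δ]).map sR).prod δ ∈ C.Pos := hstab δ (D.mem_pos hδ)
      have hneg : ⟪(L.map sR).prod δ, C.p⟫ < 0 := by
        have h1 : ((L ++ [δ]).map sR).prod δ = (L.map sR).prod (sR δ δ) := by
          rw [hw]; rfl
        rw [sR_self (C.pos_unit (D.mem_pos hδ)), map_neg] at h1
        have h2 := C.pos_inner hwδ
        rw [h1, inner_neg_left] at h2
        linarith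
      obtain ⟨M, hM, hlen', hprod⟩ := D.exchange L hL δ hδ hneg
      have hMlen : M.length ≤ k := by
        rw [List.length_append, List.length_singleton] at hlen
        omega
      have hfinal := IH M hMlen hM (by
        intro α hα
        rw [hprod, ← hw]
        exact hstab α hα)
      rw [hw, ← hprod, hfinal]

end Simple

lemma key (C : Setup n) (w : V ≃ₗᵢ[ℝ] V)
    (hw : w ∈ Subgroup.closure {r : V ≃ₗᵢ[ℝ] V | ∃ α ∈ C.Φ, r = sR α})
    (hfix : w C.p = C.p) : w = 1 := by
  obtain ⟨D⟩ := exists_simple C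
  have hword : ∃ l : List V, (∀ γ ∈ l, γ ∈ D.Δ) ∧ (l.map sR).prod = w := by
    refine Subgroup.closure_induction
      (p := fun x _ => ∃ l : List V, (∀ γ ∈ l, γ ∈ D.Δ) ∧ (l.map sR).prod = x)
      ?_ ?_ ?_ ?_ hw
    · rintro x ⟨α, hαΦ, rfl⟩
      rcases C.pos_or_neg hαΦ with h | h
      · exact D.gen α h
      · obtain ⟨l, h1, h2⟩ := D.gen (-α) h
        exact ⟨l, h1, by rw [h2, sR_neg]⟩
    · exact ⟨[], by simp, by simp⟩
    · rintro x y _ _ ⟨l₁, hl₁, hp₁⟩ ⟨l₂, hl₂, hp₂⟩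
      refine ⟨l₁ ++ l₂, ?_, ?_⟩
      · intro γ hγ
        rcases List.mem_append.mp hγ with h | h
        · exact hl₁ γ h
        · exact hl₂ γ h
      · rw [List.map_append, List.prod_append, hp₁, hp₂]
    · rintro x _ ⟨l, hl, hp⟩
      exact ⟨l.reverse, fun γ hγ => hl γ (List.mem_reverse.mp hγ),
        by rw [← prod_inv, hp]⟩
  obtain ⟨l, hl, hlw⟩ := hword
  have hstab : ∀ α ∈ C.Pos, (l.map sR).prod α ∈ C.Pos := by
    intro α hα
    have hmem : (l.map sR).prod α ∈ C.Φ :=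
      C.listprod_mem l (fun γ hγ => C.pos_sub (D.mem_pos (hl γ hγ))) α (C.pos_sub hα)
    refine C.mem_pos_of hmem ?_
    have hval : ⟪w α, C.p⟫ = ⟪α, C.p⟫ := by
      calc ⟪w α, C.p⟫ = ⟪w α, w C.p⟫ := by rw [hfix]
        _ = ⟪α, C.p⟫ := w.inner_map_map α C.p
    rw [hlw, hval]
    exact C.pos_inner hα
  rw [← hlw]
  exact D.eq_one_of_pos_stable l.length l le_rfl hl hstab

/-! ### A vector avoiding finitely many hyperplanes, within a subspace -/

lemma reg_exists (F : Finset V) (A : Submodule ℝ V)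
    (h : ∀ e ∈ F, ∃ a ∈ A, ⟪e, a⟫ ≠ 0) : ∃ p ∈ A, ∀ e ∈ F, ⟪e, p⟫ ≠ 0 := by
  induction F using Finset.induction_on with
  | empty => exact ⟨0, A.zero_mem, fun e he => absurd he (by simp)⟩
  | @insert e F henF ih =>
    obtain ⟨p, hpA, hp⟩ := ih fun f hf => h f (Finset.mem_insert_of_mem hf)
    obtain ⟨a, haA, hea⟩ := h e (Finset.mem_insert_self e F)
    set bad : Finset ℝ :=
      (insert e F).image (fun f => if ⟪f, a⟫ = 0 then 0 else -⟪f, p⟫ / ⟪f, a⟫) with hbad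
    obtain ⟨t, ht⟩ := Infinite.exists_notMem_finset bad
    refine ⟨p + t • a, A.add_mem hpA (A.smul_mem t haA), ?_⟩
    intro f hf
    rw [inner_add_right, real_inner_smul_right]
    by_cases hfa : ⟪f, a⟫ = 0
    · rw [hfa, mul_zero, add_zero]
      rcases Finset.mem_insert.mp hf with rfl | hfF
      · exact absurd hfa hea
      · exact hp f hfF
    · intro hzero
      apply ht
      rw [hbad, Finset.mem_image]
      refine ⟨f, hf, ?_⟩
      rw [if_neg hfa, div_eq_iff hfa]
      linarith

lemma card_le_dim {S : Finset V} (hu : ∀ e ∈ S, ‖e‖ = 1)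
    (ho : ∀ x ∈ S, ∀ y ∈ S, x ≠ y → ⟪x, y⟫ = 0) : S.card ≤ n := by
  have hON : Orthonormal ℝ (fun x : ↥S => (x : V)) :=
    ⟨fun i => hu i i.2, fun i j hij => ho i i.2 j j.2 fun h => hij (Subtype.ext h)⟩
  have h := hON.linearIndependent.fintype_card_le_finrank
  rwa [Fintype.card_coe, finrank_euclideanSpace_fin] at h

/-! ### The core extension step -/

lemma core {E : Finset V} (hunit : ∀ e ∈ E, ‖e‖ = 1)
    (hcox : ∀ e ∈ E, ∀ f ∈ E,
      Submodule.reflection (hyp e) f ∈ E ∨ -(Submodule.reflection (hyp e) f) ∈ E)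
    (hneg1 : ∃ w ∈ Subgroup.closure
      {w : V ≃ₗᵢ[ℝ] V | ∃ e ∈ E, w = Submodule.reflection (hyp e)}, ∀ x, w x = -x)
    (S : Finset V) (hSE : ↑S ⊆ (E : Set V))
    (hSorth : ∀ x ∈ S, ∀ y ∈ S, x ≠ y → ⟪x, y⟫ = 0) (hlt : S.card < n) :
    ∃ e ∈ E, ∀ s ∈ S, ⟪e, s⟫ = 0 := by
  by_contra hno
  push_neg at hno
  set A := Submodule.span ℝ (S : Set V) with hA
  obtain ⟨p, hpA, hpreg⟩ := reg_exists E A (by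
    intro e he
    obtain ⟨s, hs, hes⟩ := hno e he
    exact ⟨s, Submodule.subset_span hs, hes⟩)
  set Φ : Finset V := E ∪ E.image (fun x => -x) with hΦ
  have hEΦ : E ⊆ Φ := Finset.subset_union_left
  have hmemΦ : ∀ α : V, α ∈ Φ ↔ α ∈ E ∨ -α ∈ E := by
    intro α
    rw [hΦ, Finset.mem_union, Finset.mem_image]
    constructor
    · rintro (h | ⟨b, hb, rfl⟩)
      · exact Or.inl h
      · right; rwa [neg_neg]
    · rintro (h | h)
      · exact Or.inl h
      · exact Or.inr ⟨-α, h, neg_neg α⟩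
  have hCunit : ∀ α ∈ Φ, ‖α‖ = 1 := by
    intro α hα
    rcases (hmemΦ α).mp hα with h | h
    · exact hunit α h
    · rw [← norm_neg]; exact hunit _ h
  have hCneg : ∀ α ∈ Φ, -α ∈ Φ := by
    intro α hα
    rcases (hmemΦ α).mp hα with h | h
    · exact (hmemΦ (-α)).mpr (Or.inr (by rwa [neg_neg]))
    · exact (hmemΦ (-α)).mpr (Or.inl h)
  have hCrefl : ∀ α ∈ Φ, ∀ β ∈ Φ, sR α β ∈ Φ := by
    have main : ∀ e ∈ E, ∀ β ∈ Φ, sR e β ∈ Φ := by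
      intro e he β hβ'
      rcases (hmemΦ β).mp hβ' with h | h
      · rcases hcox e he β h with h2 | h2
        · exact hEΦ h2
        · exact (hmemΦ _).mpr (Or.inr h2)
      · have h3 : sR e β = -(sR e (-β)) := by rw [map_neg, neg_neg]
        rcases hcox e he (-β) h with h2 | h2
        · rw [h3]; exact (hmemΦ _).mpr (Or.inr (by rwa [neg_neg]))
        · rw [h3]; exact hEΦ h2
    intro α hα β hβ
    rcases (hmemΦ α).mp hα with h | h
    · exact main α h β hβ
    · rw [← sR_neg α]
      exact main (-α) h β hβ
  have hCreg : ∀ α ∈ Φ, ⟪α, p⟫ ≠ 0 := by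
    intro α hα
    rcases (hmemΦ α).mp hα with h | h
    · exact hpreg α h
    · have h1 := hpreg (-α) h
      rw [inner_neg_left] at h1
      exact fun h0 => h1 (by rw [h0, neg_zero])
  set Cst : Setup n := ⟨Φ, p, hCunit, hCneg, hCrefl, hCreg⟩ with hCst
  obtain ⟨w1, hw1, hw1neg⟩ := hneg1
  set wS := (S.toList.map sR).prod with hwS
  have hSunit : ∀ e ∈ S, ‖e‖ = 1 := fun e he => hunit e (hSE he)
  have hw0mem : wS * w1 ∈ Subgroup.closure
      {r : V ≃ₗᵢ[ℝ] V | ∃ α ∈ Cst.Φ, r = sR α} := by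
    apply Subgroup.mul_mem
    · apply Subgroup.list_prod_mem
      intro x hx
      obtain ⟨s, hs, rfl⟩ := List.mem_map.mp hx
      exact Subgroup.subset_closure ⟨s, hEΦ (hSE (Finset.mem_toList.mp hs)), rfl⟩
    · refine Subgroup.closure_mono ?_ hw1
      rintro r ⟨e, he, rfl⟩
      exact ⟨e, hEΦ he, rfl⟩
  have hw0p : (wS * w1) p = p := by
    have h1 : (wS * w1) p = wS (w1 p) := rfl
    rw [h1, hw1neg p, map_neg, prod_sR_neg_on_span S hSunit hSorth p hpA, neg_neg]
  have hw0 := key Cst _ hw0mem hw0p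
  have hAfin : Module.finrank ℝ A ≤ S.card := finrank_span_finset_le_card S
  have hOrth : Module.finrank ℝ (Aᗮ) ≠ 0 := by
    have hsum := Submodule.finrank_add_finrank_orthogonal A
    have hV : Module.finrank ℝ (EuclideanSpace ℝ (Fin n)) = n := finrank_euclideanSpace_fin
    omega
  have hbot : Aᗮ ≠ ⊥ := by
    intro hb
    rw [hb, finrank_bot] at hOrth
    exact hOrth rfl
  obtain ⟨u, huA, hune⟩ := Submodule.exists_mem_ne_zero_of_ne_bot hbot
  have horthu : ∀ e ∈ S.toList, ⟪e, u⟫ = 0 := fun e he =>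
    (Submodule.mem_orthogonal A u).mp huA e
      (Submodule.subset_span (Finset.mem_toList.mp he))
  have hwSu : wS u = u := prod_sR_fix_of_orth S horthu
    (fun e he => hSunit e (Finset.mem_toList.mp he))
    (S.nodup_toList.pairwise_of_forall_ne fun a ha b hb hab =>
      hSorth a (Finset.mem_toList.mp ha) b (Finset.mem_toList.mp hb) hab)
  have hw0u : (wS * w1) u = -u := by
    have h1 : (wS * w1) u = wS (w1 u) := rfl
    rw [h1, hw1neg u, map_neg, hwSu]
  rw [hw0] at hw0u
  have huu : u = -u := by simpa using hw0u
  have h2 : u + u = 0 := by nth_rewrite 1 [huu]; abel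
  have h3 : (2 : ℝ) • u = 0 := by rw [two_smul]; exact h2
  rcases smul_eq_zero.mp h3 with h | h
  · norm_num at h
  · exact hune h

/-! ### Direction (c) ⇒ (b) -/

lemma extend {E : Finset V} (hunit : ∀ e ∈ E, ‖e‖ = 1)
    (hcox : ∀ e ∈ E, ∀ f ∈ E,
      Submodule.reflection (hyp e) f ∈ E ∨ -(Submodule.reflection (hyp e) f) ∈ E)
    (hneg1 : ∃ w ∈ Subgroup.closure
      {w : V ≃ₗᵢ[ℝ] V | ∃ e ∈ E, w = Submodule.reflection (hyp e)}, ∀ x, w x = -x) :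
    ∀ k (S : Finset V), ↑S ⊆ (E : Set V) →
      (∀ x ∈ S, ∀ y ∈ S, x ≠ y → ⟪x, y⟫ = 0) → S.card + k = n →
      ∃ T : Finset V, S ⊆ T ∧ ↑T ⊆ (E : Set V) ∧
        (∀ x ∈ T, ∀ y ∈ T, x ≠ y → ⟪x, y⟫ = 0) ∧ T.card = n := by
  intro k
  induction k with
  | zero =>
    intro S h1 h2 h3
    exact ⟨S, Finset.Subset.refl S, h1, h2, by omega⟩
  | succ k ih =>
    intro S h1 h2 h3
    obtain ⟨e, heE, heorth⟩ := core hunit hcox hneg1 S h1 h2 (by omega)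
    have heS : e ∉ S := by
      intro heS
      have h4 := heorth e heS
      rw [real_inner_self_eq_norm_mul_norm, hunit e heE] at h4
      norm_num at h4
    have hins : ↑(insert e S) ⊆ (E : Set V) := by
      rw [Finset.coe_insert]
      intro x hx
      rcases Set.mem_insert_iff.mp hx with rfl | h
      · exact heE
      · exact h1 h
    have hinsorth : ∀ x ∈ insert e S, ∀ y ∈ insert e S, x ≠ y → ⟪x, y⟫ = 0 := by
      intro x hx y hy hxy
      rcases Finset.mem_insert.mp hx with rfl | hxS
      · rcases Finset.mem_insert.mp hy with rfl | hyS
        · exact absurd rfl hxy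
        · exact heorth y hyS
      · rcases Finset.mem_insert.mp hy with rfl | hyS
        · rw [real_inner_comm]; exact heorth x hxS
        · exact h2 x hxS y hyS hxy
    obtain ⟨T, hT1, hT2, hT3, hT4⟩ := ih (insert e S) hins hinsorth
      (by rw [Finset.card_insert_of_notMem heS]; omega)
    exact ⟨T, (Finset.subset_insert e S).trans hT1, hT2, hT3, hT4⟩

/-! ### Direction (b) ⇒ (c) -/

lemma neg_one_mem {E : Finset V} (hunit : ∀ e ∈ E, ‖e‖ = 1)
    (T : Finset V) (hTE : ↑T ⊆ (E : Set V))
    (hTorth : ∀ x ∈ T, ∀ y ∈ T, x ≠ y → ⟪x, y⟫ = 0) (hTcard : T.card = n) :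
    ∃ w ∈ Subgroup.closure
      {w : V ≃ₗᵢ[ℝ] V | ∃ e ∈ E, w = Submodule.reflection (hyp e)}, ∀ x, w x = -x := by
  refine ⟨(T.toList.map sR).prod, ?_, ?_⟩
  · apply Subgroup.list_prod_mem
    intro x hx
    obtain ⟨t, ht, rfl⟩ := List.mem_map.mp hx
    exact Subgroup.subset_closure ⟨t, hTE (Finset.mem_toList.mp ht), rfl⟩
  · have hTunit : ∀ e ∈ T, ‖e‖ = 1 := fun e he => hunit e (hTE he)
    have hON : Orthonormal ℝ (fun x : ↥T => (x : V)) :=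
      ⟨fun i => hTunit i i.2, fun i j hij => hTorth i i.2 j j.2 fun h => hij (Subtype.ext h)⟩
    have hspan : Submodule.span ℝ (Set.range (fun x : ↥T => (x : V))) = ⊤ := by
      apply hON.linearIndependent.span_eq_top_of_card_eq_finrank'
      rw [Fintype.card_coe, finrank_euclideanSpace_fin, hTcard]
    have hrange : Set.range (fun x : ↥T => (x : V)) = (T : Set V) := by
      ext x; simp
    intro x
    have hx : x ∈ Submodule.span ℝ (T : Set V) := by
      rw [← hrange, hspan]; trivial
    exact prod_sR_neg_on_span T hTunit hTorth x hx

end CoxAux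

/-- For a Coxeter arrangement with unit normal vectors `E` and finite Coxeter group `W`
(generated by the reflections in the hyperplanes, the arrangement being closed under them),
the following are equivalent: (b) every set of pairwise orthogonal elements of `E` is
contained in a set of `n` pairwise orthogonal elements of `E`; (c) `−id` belongs to `W`. -/
theorem neg_id_mem_iff_orthogonal_extension {n : ℕ} (E : Finset (EuclideanSpace ℝ (Fin n)))
    (hunit : ∀ e ∈ E, ‖e‖ = 1) (hopp : ∀ e ∈ E, -e ∉ E)
    (hcox : ∀ e ∈ E, ∀ f ∈ E,
      Submodule.reflection (hyp e) f ∈ E ∨ -(Submodule.reflection (hyp e) f) ∈ E)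
    (hfin : Finite (Subgroup.closure
      {w : EuclideanSpace ℝ (Fin n) ≃ₗᵢ[ℝ] EuclideanSpace ℝ (Fin n) |
        ∃ e ∈ E, w = Submodule.reflection (hyp e)})) :
    ((∀ S : Finset (EuclideanSpace ℝ (Fin n)), ↑S ⊆ (E : Set (EuclideanSpace ℝ (Fin n))) →
        (∀ x ∈ S, ∀ y ∈ S, x ≠ y → ⟪x, y⟫ = 0) →
        ∃ T : Finset (EuclideanSpace ℝ (Fin n)), S ⊆ T ∧
          ↑T ⊆ (E : Set (EuclideanSpace ℝ (Fin n))) ∧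
          (∀ x ∈ T, ∀ y ∈ T, x ≠ y → ⟪x, y⟫ = 0) ∧ T.card = n) ↔
      (∃ w ∈ Subgroup.closure
          {w : EuclideanSpace ℝ (Fin n) ≃ₗᵢ[ℝ] EuclideanSpace ℝ (Fin n) |
            ∃ e ∈ E, w = Submodule.reflection (hyp e)},
        ∀ x, w x = -x)) := by
  constructor
  · intro hb
    obtain ⟨T, _, hTE, hTorth, hTcard⟩ := hb ∅ (by simp) (by simp)
    exact CoxAux.neg_one_mem hunit T hTE hTorth hTcard
  · intro hc S hSE hSorth
    have hcard : S.card ≤ n :=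
      CoxAux.card_le_dim (fun e he => hunit e (hSE he)) hSorth
    exact CoxAux.extend hunit hcox hc (n - S.card) S hSE hSorth (by omega)
end
end

section
/- Let H be a Coxeter arrangement in V with Coxeter group W, let L ⊆ V be a measurable set stable under W, let H_e ∈ H with unit normal e, and let b be a scalar multiple of e. Then (L + b) ∩ H_e is stable under the Coxeter group of the even restricted arrangement H_e, i.e., under every orthogonal reflection of H_e in a subspace V' = H_e ∩ H_f where f ∈ E is orthogonal to e. -/
/-! The reflection in `H_f` lies in `W`, so it preserves `L`; since `f ⊥ e` it fixes `e`, hence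
commutes with translation by `c • e` and preserves `H_e`. -/

open scoped RealInnerProductSpace

noncomputable section

theorem Set.image_image_add_right_of_apply_eq {G F : Type*} [Add G] [FunLike F G G]
    [AddHomClass F G G] (r : F) {b : G} (hb : r b = b) (L : Set G) :
    r '' ((· + b) '' L) = (· + b) '' (r '' L) := by
  simp only [Set.image_image, map_add, hb]

namespace LinearIsometryEquiv

variable {V : Type*} [NormedAddCommGroup V] [InnerProductSpace ℝ V]

theorem preimage_orthogonal_span_singleton_of_apply_eq (r : V ≃ₗᵢ[ℝ] V) {e : V}
    (he : r e = e) : r ⁻¹' ((ℝ ∙ e)ᗮ : Set V) = (ℝ ∙ e)ᗮ := by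
  ext x
  simp only [Set.mem_preimage, SetLike.mem_coe,
    Submodule.mem_orthogonal_singleton_iff_inner_right]
  nth_rewrite 1 [← he]
  rw [r.inner_map_map]

theorem image_orthogonal_span_singleton_of_apply_eq (r : V ≃ₗᵢ[ℝ] V) {e : V}
    (he : r e = e) : r '' ((ℝ ∙ e)ᗮ : Set V) = (ℝ ∙ e)ᗮ := by
  conv_lhs => rw [← r.preimage_orthogonal_span_singleton_of_apply_eq he]
  exact r.surjective.image_preimage _

end LinearIsometryEquiv

theorem translate_inter_stable_general {n : ℕ} (E : Finset (EuclideanSpace ℝ (Fin n)))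
    (L : Set (EuclideanSpace ℝ (Fin n)))
    (hL : ∀ w ∈ Subgroup.closure
      {w : EuclideanSpace ℝ (Fin n) ≃ₗᵢ[ℝ] EuclideanSpace ℝ (Fin n) |
        ∃ e ∈ E, w = Submodule.reflection (hyp e)}, w '' L = L)
    (e : EuclideanSpace ℝ (Fin n)) (c : ℝ)
    (f : EuclideanSpace ℝ (Fin n)) (hf : f ∈ E) (hef : ⟪e, f⟫ = 0) :
    (Submodule.reflection (hyp f)) ''
        (((fun x => x + c • e) '' L) ∩ (hyp e : Set (EuclideanSpace ℝ (Fin n)))) =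
      ((fun x => x + c • e) '' L) ∩ (hyp e : Set (EuclideanSpace ℝ (Fin n))) := by
  set r := Submodule.reflection (hyp f)
  have hre : r e = e := Submodule.reflection_mem_subspace_eq_self <|
    (Submodule.mem_orthogonal_singleton_iff_inner_left).2 hef
  have hrL : r '' L = L := hL r (Subgroup.subset_closure ⟨f, hf, rfl⟩)
  have hrce : r (c • e) = c • e := by rw [map_smul, hre]
  rw [Set.image_inter r.injective, Set.image_image_add_right_of_apply_eq r hrce, hrL, hyp,
    r.image_orthogonal_span_singleton_of_apply_eq hre]

/-- Let `H` be a Coxeter arrangement with unit normal vectors `E` and Coxeter group `W`,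
`L` a measurable set stable under `W`, `e ∈ E`, and `b = c • e` a scalar multiple of `e`.
Then `(L + b) ∩ H_e` is stable under the Coxeter group of the even restricted arrangement
`H_e`, i.e. under every orthogonal reflection in a subspace `H_e ∩ H_f` with `f ∈ E`
orthogonal to `e` (this reflection being the restriction to `H_e` of the reflection in
`H_f`). -/
theorem translate_inter_stable {n : ℕ} (E : Finset (EuclideanSpace ℝ (Fin n)))
    (hunit : ∀ e ∈ E, ‖e‖ = 1) (hopp : ∀ e ∈ E, -e ∉ E)
    (hcox : ∀ e ∈ E, ∀ f ∈ E,
      Submodule.reflection (hyp e) f ∈ E ∨ -(Submodule.reflection (hyp e) f) ∈ E)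
    (hfin : Finite (Subgroup.closure
      {w : EuclideanSpace ℝ (Fin n) ≃ₗᵢ[ℝ] EuclideanSpace ℝ (Fin n) |
        ∃ e ∈ E, w = Submodule.reflection (hyp e)}))
    (L : Set (EuclideanSpace ℝ (Fin n))) (hLmeas : MeasurableSet L)
    (hL : ∀ w ∈ Subgroup.closure
      {w : EuclideanSpace ℝ (Fin n) ≃ₗᵢ[ℝ] EuclideanSpace ℝ (Fin n) |
        ∃ e ∈ E, w = Submodule.reflection (hyp e)}, w '' L = L)
    (e : EuclideanSpace ℝ (Fin n)) (he : e ∈ E) (c : ℝ)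
    (f : EuclideanSpace ℝ (Fin n)) (hf : f ∈ E) (hef : ⟪e, f⟫ = 0) :
    (Submodule.reflection (hyp f)) ''
        (((fun x => x + c • e) '' L) ∩ (hyp e : Set (EuclideanSpace ℝ (Fin n)))) =
      ((fun x => x + c • e) '' L) ∩ (hyp e : Set (EuclideanSpace ℝ (Fin n))) :=
  translate_inter_stable_general E L hL e c f hf hef
end
end

section
/- Let H be a central hyperplane arrangement with at least one hyperplane in an n-dimensional space, given by a set E of unit vectors with E ∩ (−E) = ∅. Then for every e ∈ E, |H| ≡ 1 + |H_e| (mod 2), where H_e is the even restricted arrangement on H_e. Consequently, |H| ≡ n (mod 2) if and only if |H_e| ≡ n − 1 (mod 2) for some (equivalently, every) e ∈ E. -/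
open scoped RealInnerProductSpace

noncomputable section

/-- The intersection multiplicity of `H_e ∩ H_f`. -/
def imult {n : ℕ} (E : Finset (EuclideanSpace ℝ (Fin n))) (e f : EuclideanSpace ℝ (Fin n)) : ℕ :=
  {g | g ∈ E ∧ hyp e ⊓ hyp f ≤ hyp g}.ncard

/-- The even restricted arrangement on the hyperplane `H_e`: the set of subspaces
`H_e ∩ H_f`, `f ∈ E`, `f ≠ e`, with even intersection multiplicity. -/
def evenResSet {n : ℕ} (E : Finset (EuclideanSpace ℝ (Fin n))) (e : EuclideanSpace ℝ (Fin n)) :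
    Set (Submodule ℝ (EuclideanSpace ℝ (Fin n))) :=
  {K | ∃ f ∈ E, f ≠ e ∧ K = hyp e ⊓ hyp f ∧ Even (imult E e f)}

lemma aux_not_mem_span {n : ℕ} {e f : EuclideanSpace ℝ (Fin n)} (he : ‖e‖ = 1) (hf : ‖f‖ = 1)
    (hne : f ≠ e) (hne' : f ≠ -e) : f ∉ (ℝ ∙ e) := by
  intro hmem
  obtain ⟨a, ha⟩ := Submodule.mem_span_singleton.mp hmem
  have habs : |a| = 1 := by
    have h1 := congrArg norm ha
    rwa [norm_smul, he, mul_one, hf, Real.norm_eq_abs] at h1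
  rcases (abs_eq (by norm_num : (0:ℝ) ≤ 1)).mp habs with h1 | h1
  · exact hne (by rw [← ha, h1, one_smul])
  · exact hne' (by rw [← ha, h1, neg_smul, one_smul])

lemma hyp_inf {n : ℕ} (e f : EuclideanSpace ℝ (Fin n)) :
    hyp e ⊓ hyp f = ((ℝ ∙ e) ⊔ (ℝ ∙ f))ᗮ :=
  Submodule.inf_orthogonal _ _

lemma le_hyp_iff {n : ℕ} (e f g : EuclideanSpace ℝ (Fin n)) :
    hyp e ⊓ hyp f ≤ hyp g ↔ (ℝ ∙ g) ≤ (ℝ ∙ e) ⊔ (ℝ ∙ f) := by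
  rw [hyp_inf, hyp]
  constructor
  · intro h
    have h2 := Submodule.orthogonal_le h
    rwa [Submodule.orthogonal_orthogonal, Submodule.orthogonal_orthogonal] at h2
  · exact Submodule.orthogonal_le

lemma key_lemma {n : ℕ} {E : Finset (EuclideanSpace ℝ (Fin n))}
    (hunit : ∀ e ∈ E, ‖e‖ = 1) (hopp : ∀ e ∈ E, -e ∉ E)
    {e f g : EuclideanSpace ℝ (Fin n)} (he : e ∈ E) (hf : f ∈ E) (hg : g ∈ E)
    (hfe : f ≠ e) (hge : g ≠ e) :
    hyp e ⊓ hyp f ≤ hyp g ↔ hyp e ⊓ hyp g = hyp e ⊓ hyp f := by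
  constructor
  · intro h
    have hg' : g ∈ (ℝ ∙ e) ⊔ (ℝ ∙ f) :=
      (le_hyp_iff e f g).mp h (Submodule.mem_span_singleton_self g)
    obtain ⟨y, hy, z, hz, hyz⟩ := Submodule.mem_sup.mp hg'
    obtain ⟨a, rfl⟩ := Submodule.mem_span_singleton.mp hy
    obtain ⟨b, rfl⟩ := Submodule.mem_span_singleton.mp hz
    have hge' : g ≠ -e := fun h' => hopp g hg (by rw [h', neg_neg]; exact he)
    have hgnspan : g ∉ (ℝ ∙ e) :=
      aux_not_mem_span (hunit e he) (hunit g hg) hge hge'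
    have hb : b ≠ 0 := by
      rintro rfl
      apply hgnspan
      rw [← hyz, zero_smul, add_zero]
      exact Submodule.smul_mem _ a (Submodule.mem_span_singleton_self e)
    have hf' : f ∈ (ℝ ∙ e) ⊔ (ℝ ∙ g) := by
      have hfeq : f = b⁻¹ • g - (b⁻¹ * a) • e := by
        rw [← hyz]
        rw [smul_add, smul_smul, smul_smul, inv_mul_cancel₀ hb, one_smul, mul_comm]
        abel
      rw [hfeq]
      exact Submodule.sub_mem _
        (Submodule.mem_sup_right (Submodule.smul_mem _ _ (Submodule.mem_span_singleton_self g)))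
        (Submodule.mem_sup_left (Submodule.smul_mem _ _ (Submodule.mem_span_singleton_self e)))
    have hspan : (ℝ ∙ e) ⊔ (ℝ ∙ f) = (ℝ ∙ e) ⊔ (ℝ ∙ g) := by
      apply le_antisymm
      · exact sup_le le_sup_left ((Submodule.span_singleton_le_iff_mem _ _).mpr hf')
      · exact sup_le le_sup_left ((Submodule.span_singleton_le_iff_mem _ _).mpr hg')
    rw [hyp_inf, hyp_inf, hspan]
  · intro h
    rw [← h]
    exact inf_le_right

/-- For a nonempty central arrangement, `|H| ≡ 1 + |H_e| (mod 2)` for every `e ∈ E`;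
consequently `|H| ≡ n (mod 2)` iff `|H_e| ≡ n − 1 (mod 2)` (for every `e ∈ E`). -/
theorem card_parity_even_restriction {n : ℕ} (E : Finset (EuclideanSpace ℝ (Fin n)))
    (hE : E.Nonempty)
    (hunit : ∀ e ∈ E, ‖e‖ = 1) (hopp : ∀ e ∈ E, -e ∉ E) :
    (∀ e ∈ E, E.card ≡ 1 + (evenResSet E e).ncard [MOD 2]) ∧
    (∀ e ∈ E, (E.card ≡ n [MOD 2] ↔ (evenResSet E e).ncard ≡ n - 1 [MOD 2])) := by
  classical
  have hn : 1 ≤ n := by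
    obtain ⟨e, he⟩ := hE
    by_contra h
    push_neg at h
    interval_cases n
    have he0 : e = 0 := Subsingleton.elim e 0
    have := hunit e he
    rw [he0] at this
    simp at this
  have main : ∀ e ∈ E, E.card ≡ 1 + (evenResSet E e).ncard [MOD 2] := by
    intro e he
    set S := E.erase e with hS
    set φ : EuclideanSpace ℝ (Fin n) → Submodule ℝ (EuclideanSpace ℝ (Fin n)) :=
      fun f => hyp e ⊓ hyp f with hφ
    -- imult formula
    have himult : ∀ f ∈ S, imult E e f = (S.filter (fun g => φ g = φ f)).card + 1 := by
      intro f hfS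
      have hfE := Finset.mem_of_mem_erase hfS
      have hfe := Finset.ne_of_mem_erase hfS
      have hset : {g | g ∈ E ∧ hyp e ⊓ hyp f ≤ hyp g}
          = ↑(insert e (S.filter (fun g => φ g = φ f))) := by
        ext g
        simp only [Set.mem_setOf_eq, Finset.coe_insert, Set.mem_insert_iff,
          Finset.coe_filter, Finset.mem_erase, hS]
        constructor
        · rintro ⟨hgE, hle⟩
          by_cases hge : g = e
          · exact Or.inl hge
          · exact Or.inr ⟨⟨hge, hgE⟩,
              (key_lemma hunit hopp he hfE hgE hfe hge).mp hle⟩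
        · rintro (rfl | ⟨⟨hge, hgE⟩, heq⟩)
          · exact ⟨he, inf_le_left⟩
          · refine ⟨hgE, (key_lemma hunit hopp he hfE hgE hfe hge).mpr heq⟩
      rw [imult, hset, Set.ncard_coe_finset, Finset.card_insert_of_notMem]
      intro hmem
      exact (Finset.mem_erase.mp (Finset.mem_of_mem_filter e hmem)).1 rfl
    -- evenResSet as a finset
    have hERS : evenResSet E e = ↑((S.filter (fun f => Even (imult E e f))).image φ) := by
      ext K
      simp only [evenResSet, Set.mem_setOf_eq, Finset.coe_image, Set.mem_image,
        Finset.mem_coe, Finset.mem_filter, Finset.mem_erase, hS]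
      constructor
      · rintro ⟨f, hfE, hfe, rfl, hev⟩
        exact ⟨f, ⟨⟨hfe, hfE⟩, hev⟩, rfl⟩
      · rintro ⟨f, ⟨⟨hfe, hfE⟩, hev⟩, rfl⟩
        exact ⟨f, hfE, hfe, rfl, hev⟩
    -- image of filter = filter of image
    have himg : (S.filter (fun f => Even (imult E e f))).image φ
        = (S.image φ).filter (fun K => Odd ((S.filter (fun g => φ g = K)).card)) := by
      ext K
      simp only [Finset.mem_image, Finset.mem_filter]
      constructor
      · rintro ⟨f, ⟨hfS, hev⟩, rfl⟩
        refine ⟨⟨f, hfS, rfl⟩, ?_⟩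
        rw [himult f hfS] at hev
        rw [← Nat.not_even_iff_odd]
        exact Nat.even_add_one.mp hev
      · rintro ⟨⟨f, hfS, rfl⟩, hodd⟩
        refine ⟨f, ⟨hfS, ?_⟩, rfl⟩
        rw [himult f hfS, Nat.even_add_one, Nat.not_even_iff_odd]
        exact hodd
    -- counting
    have hcardS : S.card = ∑ K ∈ S.image φ, (S.filter (fun g => φ g = K)).card :=
      Finset.card_eq_sum_card_image φ S
    have hpar : (∑ K ∈ S.image φ, (S.filter (fun g => φ g = K)).card) ≡
        ((S.image φ).filter (fun K => Odd ((S.filter (fun g => φ g = K)).card))).card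
        [MOD 2] := by
      rw [Finset.card_filter]
      unfold Nat.ModEq
      rw [Finset.sum_nat_mod, Finset.sum_nat_mod (S.image φ) 2]
      congr 1
      apply Finset.sum_congr rfl
      intro K _
      by_cases h : Odd ((S.filter (fun g => φ g = K)).card)
      · simp [h, Nat.odd_iff.mp h]
      · rw [Nat.not_odd_iff_even] at h
        simp [Nat.not_odd_iff_even.mpr h |> fun _ => h, Nat.even_iff.mp h,
          Nat.not_odd_iff_even.mpr h]
    have hScard : S.card + 1 = E.card := Finset.card_erase_add_one he
    have hfin : (evenResSet E e).ncard =
        ((S.image φ).filter (fun K => Odd ((S.filter (fun g => φ g = K)).card))).card := by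
      rw [hERS, Set.ncard_coe_finset, himg]
    rw [← hScard, hfin]
    have : S.card ≡ ((S.image φ).filter
        (fun K => Odd ((S.filter (fun g => φ g = K)).card))).card [MOD 2] := by
      rw [hcardS]; exact hpar
    calc S.card + 1 ≡ ((S.image φ).filter
          (fun K => Odd ((S.filter (fun g => φ g = K)).card))).card + 1 [MOD 2] :=
        Nat.ModEq.add_right 1 this
      _ = 1 + _ := by ring
  refine ⟨main, ?_⟩
  intro e he
  have h1 := main e he
  have hne : n = 1 + (n - 1) := by omega
  constructor
  · intro h2
    have h3 : 1 + (evenResSet E e).ncard ≡ 1 + (n - 1) [MOD 2] := by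
      calc 1 + (evenResSet E e).ncard ≡ E.card [MOD 2] := h1.symm
        _ ≡ n [MOD 2] := h2
        _ = 1 + (n - 1) := hne
    exact Nat.ModEq.add_left_cancel' 1 h3
  · intro h2
    calc E.card ≡ 1 + (evenResSet E e).ncard [MOD 2] := h1
      _ ≡ 1 + (n - 1) [MOD 2] := Nat.ModEq.add_left 1 h2
      _ = n := hne.symm
end
end

section
/- Let H be a central hyperplane arrangement in an n-dimensional space. If H is even (every even restriction sequence has essential associated arrangement), then H satisfies the parity condition: |H| ≡ n (mod 2). -/
open scoped RealInnerProductSpace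

noncomputable section

/-- The even restriction of an arrangement `A` (a set of subspaces, all hyperplanes of the
current ambient subspace) to one of its hyperplanes `K`: the intersections `K ⊓ K'` for
`K' ∈ A`, `K' ≠ K`, whose intersection multiplicity in `A` is even. -/
def evenRes {n : ℕ} (A : Set (Submodule ℝ (EuclideanSpace ℝ (Fin n))))
    (K : Submodule ℝ (EuclideanSpace ℝ (Fin n))) :
    Set (Submodule ℝ (EuclideanSpace ℝ (Fin n))) :=
  {J | ∃ K' ∈ A, K' ≠ K ∧ J = K ⊓ K' ∧ Even {K'' | K'' ∈ A ∧ K ⊓ K' ≤ K''}.ncard}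

/-- The subspace `H_{e₁,…,e_r} = ⋂ H_{e_i}` for a sequence given as a list (most recent
element first). -/
def interList {n : ℕ} (l : List (EuclideanSpace ℝ (Fin n))) :
    Submodule ℝ (EuclideanSpace ℝ (Fin n)) :=
  l.foldr (fun e W => W ⊓ hyp e) ⊤

/-- `IsERS E l A` means that the reversal of `l` is an even restriction sequence for the
arrangement given by the unit normal vectors in `E`, with associated arrangement `A` on the
subspace `interList l`.  The empty sequence has associated arrangement `H` itself; a sequence
is extended by an element `e ∈ E` whenever the new intersection subspace is a hyperplane of
the current associated arrangement, and then the new associated arrangement is the even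
restriction to it. -/
inductive IsERS {n : ℕ} (E : Finset (EuclideanSpace ℝ (Fin n))) :
    List (EuclideanSpace ℝ (Fin n)) → Set (Submodule ℝ (EuclideanSpace ℝ (Fin n))) → Prop
  | nil : IsERS E [] {H | ∃ e ∈ E, H = hyp e}
  | cons {l A e} : IsERS E l A → e ∈ E → interList (e :: l) ∈ A →
      IsERS E (e :: l) (evenRes A (interList (e :: l)))


open Module

/-! Auxiliary lemmas -/

lemma interList_cons {n : ℕ} (e : EuclideanSpace ℝ (Fin n)) (l) :
    interList (e :: l) = interList l ⊓ hyp e := rfl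

lemma finrank_hyp {n : ℕ} {e : EuclideanSpace ℝ (Fin n)} (he : e ≠ 0) :
    finrank ℝ (hyp e) + 1 = n := by
  have h := Submodule.finrank_add_finrank_orthogonal (K := (ℝ ∙ e))
  rw [finrank_span_singleton he, finrank_euclideanSpace_fin] at h
  unfold hyp
  omega

/-- Rank of the meet of two distinct corank-one subspaces of `W`. -/
lemma finrank_inf_corank {V : Type*} [AddCommGroup V] [Module ℝ V] [FiniteDimensional ℝ V]
    {W K K' : Submodule ℝ V} (hKW : K ≤ W) (hK'W : K' ≤ W) (hne : K ≠ K')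
    (hK : finrank ℝ K + 1 = finrank ℝ W) (hK' : finrank ℝ K' + 1 = finrank ℝ W) :
    finrank ℝ ↥(K ⊓ K') + 1 = finrank ℝ K := by
  have hsup : K < K ⊔ K' := by
    refine lt_of_le_of_ne le_sup_left ?_
    intro h
    exact hne (Submodule.eq_of_le_of_finrank_le (h ▸ le_sup_right) (by omega)).symm
  have h1 : finrank ℝ K < finrank ℝ ↥(K ⊔ K') := Submodule.finrank_lt_finrank_of_lt hsup
  have h2 : finrank ℝ ↥(K ⊔ K') ≤ finrank ℝ W := Submodule.finrank_mono (sup_le hKW hK'W)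
  have h3 := Submodule.finrank_sup_add_finrank_inf_eq K K'
  omega

lemma zmod2_natCast_eq_zero_iff (a : ℕ) : (a : ZMod 2) = 0 ↔ Even a := by
  rw [ZMod.natCast_eq_zero_iff]; exact (even_iff_two_dvd).symm

/-- The key parity count: `|A| ≡ 1 + |evenRes A K|  (mod 2)`. -/
lemma count_evenRes {n : ℕ} (A : Set (Submodule ℝ (EuclideanSpace ℝ (Fin n))))
    (hA : A.Finite) (K : Submodule ℝ (EuclideanSpace ℝ (Fin n))) (hK : K ∈ A)
    (hstar : ∀ K' ∈ A, K' ≠ K → ∀ K'' ∈ A, K'' ≠ K → K ⊓ K' ≤ K'' → K ⊓ K' = K ⊓ K'') :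
    (A.ncard : ZMod 2) = 1 + ((evenRes A K).ncard : ZMod 2) := by
  classical
  set F : Finset (Submodule ℝ (EuclideanSpace ℝ (Fin n))) := hA.toFinset with hF
  have hFA : (F : Set _) = A := hA.coe_toFinset
  have hKF : K ∈ F := by rw [← hFA] at hK; exact_mod_cast hK
  set S : Finset _ := F.erase K with hS
  set T : Finset _ := S.image (fun K' => K ⊓ K') with hT
  set m : Submodule ℝ (EuclideanSpace ℝ (Fin n)) → ℕ :=
    fun J => (F.filter (fun K'' => J ≤ K'')).card with hm
  -- fibers
  have hfiber : ∀ J ∈ T, (S.filter (fun K' => K ⊓ K' = J)) =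
      (F.filter (fun K'' => J ≤ K'')).erase K := by
    intro J hJ
    obtain ⟨K₀, hK₀S, hK₀⟩ := Finset.mem_image.mp hJ
    have hK₀F : K₀ ∈ F := Finset.mem_of_mem_erase hK₀S
    have hK₀ne : K₀ ≠ K := Finset.ne_of_mem_erase hK₀S
    ext K'
    simp only [Finset.mem_filter, Finset.mem_erase, hS]
    constructor
    · rintro ⟨⟨hne, hKF'⟩, hEq⟩
      exact ⟨hne, hKF', hEq ▸ inf_le_right⟩
    · rintro ⟨hne, hKF', hle⟩
      refine ⟨⟨hne, hKF'⟩, ?_⟩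
      have := hstar K₀ (by rw [← hFA]; exact_mod_cast hK₀F) hK₀ne K'
        (by rw [← hFA]; exact_mod_cast hKF') hne (hK₀ ▸ hle)
      rw [← this, hK₀]
  have hKmem : ∀ J ∈ T, K ∈ F.filter (fun K'' => J ≤ K'') := by
    intro J hJ
    obtain ⟨K₀, _, hK₀⟩ := Finset.mem_image.mp hJ
    exact Finset.mem_filter.mpr ⟨hKF, hK₀ ▸ inf_le_left⟩
  have hm1 : ∀ J ∈ T, 1 ≤ m J := by
    intro J hJ
    exact Finset.card_pos.mpr ⟨K, hKmem J hJ⟩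
  -- card of S as a sum over fibers
  have hcard : S.card = ∑ J ∈ T, (m J - 1) := by
    rw [hT, Finset.card_eq_sum_card_image (fun K' => K ⊓ K') S]
    refine Finset.sum_congr rfl fun J hJ => ?_
    rw [hfiber J hJ, Finset.card_erase_of_mem (hKmem J hJ)]
  -- pass to ZMod 2
  have hsum : (S.card : ZMod 2) = ((T.filter (fun J => Even (m J))).card : ZMod 2) := by
    rw [hcard, Nat.cast_sum, ← Finset.sum_boole]
    refine Finset.sum_congr rfl fun J hJ => ?_
    have h1 := hm1 J hJ
    rw [Nat.cast_sub h1, Nat.cast_one]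
    by_cases hE : Even (m J)
    · rw [if_pos hE, (zmod2_natCast_eq_zero_iff (m J)).mpr hE]; decide
    · rw [if_neg hE]
      have h2 : (m J : ZMod 2) ≠ 0 := fun h => hE ((zmod2_natCast_eq_zero_iff _).mp h)
      have h3 : ∀ x : ZMod 2, x ≠ 0 → x - 1 = 0 := by decide
      exact h3 _ h2
  have hmEq : ∀ J : Submodule ℝ (EuclideanSpace ℝ (Fin n)),
      {K'' | K'' ∈ A ∧ J ≤ K''}.ncard = m J := by
    intro J
    have hs : {K'' | K'' ∈ A ∧ J ≤ K''} = ↑(F.filter fun K'' => J ≤ K'') := by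
      ext x; simp [← hFA]
    rw [hs, Set.ncard_coe_finset]
  have hset : evenRes A K = ↑(T.filter fun J => Even (m J)) := by
    ext J
    simp only [evenRes, Set.mem_setOf_eq, Finset.coe_filter, Finset.mem_coe,
      Finset.mem_filter]
    constructor
    · rintro ⟨K', hK'A, hne, rfl, hEv⟩
      have hK'F : K' ∈ F := by rw [← hFA] at hK'A; exact_mod_cast hK'A
      refine ⟨Finset.mem_image.mpr ⟨K', Finset.mem_erase.mpr ⟨hne, hK'F⟩, rfl⟩, ?_⟩
      rwa [hmEq] at hEv
    · rintro ⟨hJT, hEv⟩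
      obtain ⟨K', hK'S, rfl⟩ := Finset.mem_image.mp hJT
      refine ⟨K', by rw [← hFA]; exact_mod_cast Finset.mem_of_mem_erase hK'S,
        Finset.ne_of_mem_erase hK'S, rfl, ?_⟩
      rwa [hmEq]
  have hAcard : A.ncard = S.card + 1 := by
    have h1 : 1 ≤ F.card := Finset.card_pos.mpr ⟨K, hKF⟩
    rw [← hFA, Set.ncard_coe_finset, hS, Finset.card_erase_of_mem hKF]
    omega
  rw [hAcard, hset, Set.ncard_coe_finset, Nat.cast_add, Nat.cast_one, hsum]
  ring

lemma ers_inv {n : ℕ} {E : Finset (EuclideanSpace ℝ (Fin n))}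
    (hunit : ∀ e ∈ E, ‖e‖ = 1) :
    ∀ {l A}, IsERS E l A →
      A.Finite ∧ finrank ℝ (interList l) + l.length = n ∧
      ∀ J ∈ A, (∃ e ∈ E, J = interList l ⊓ hyp e) ∧ J ≤ interList l ∧
        finrank ℝ J + 1 = finrank ℝ (interList l) := by
  intro l A h
  induction h with
  | nil =>
    have htop : interList ([] : List (EuclideanSpace ℝ (Fin n))) = ⊤ := rfl
    refine ⟨?_, ?_, ?_⟩
    · apply Set.Finite.subset (E.finite_toSet.image hyp)
      rintro J ⟨e, he, rfl⟩; exact ⟨e, he, rfl⟩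
    · rw [htop]; simp [finrank_top, finrank_euclideanSpace_fin]
    · rintro J ⟨e, he, rfl⟩
      have hne : e ≠ 0 := by
        intro h0; have := hunit e he; rw [h0, norm_zero] at this; norm_num at this
      refine ⟨⟨e, he, (top_inf_eq _).symm⟩, le_top, ?_⟩
      rw [htop, finrank_top, finrank_euclideanSpace_fin]
      exact finrank_hyp hne
  | @cons l A e h he hK ih =>
    obtain ⟨hfin, hrank, helem⟩ := ih
    obtain ⟨⟨e₀, he₀, hKeq⟩, hKW, hKrank⟩ := helem _ hK
    refine ⟨?_, ?_, ?_⟩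
    · apply Set.Finite.subset (hfin.image (fun K' => interList (e :: l) ⊓ K'))
      rintro J ⟨K', hK', _, rfl, _⟩; exact ⟨K', hK', rfl⟩
    · simp only [List.length_cons]; omega
    · rintro J ⟨K', hK'A, hne, rfl, hEv⟩
      obtain ⟨⟨e', he', hK'eq⟩, hK'W, hK'rank⟩ := helem _ hK'A
      refine ⟨⟨e', he', ?_⟩, inf_le_left, ?_⟩
      · rw [hK'eq, ← inf_assoc, inf_eq_left.mpr hKW]
      · exact finrank_inf_corank hKW hK'W (Ne.symm hne) hKrank hK'rank

lemma key {n : ℕ} (E : Finset (EuclideanSpace ℝ (Fin n)))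
    (hunit : ∀ e ∈ E, ‖e‖ = 1)
    (heven : ∀ l A, IsERS E l A → interList l ⊓ sInf A = ⊥) :
    ∀ d l A, IsERS E l A → finrank ℝ (interList l) = d →
      (A.ncard : ZMod 2) + l.length = (n : ZMod 2) := by
  intro d
  induction d using Nat.strong_induction_on with
  | _ d ih =>
  intro l A h hd
  obtain ⟨hfin, hrank, helem⟩ := ers_inv hunit h
  rcases Nat.eq_zero_or_pos d with h0 | hpos
  · have hAempty : A = ∅ := by
      rw [← Set.not_nonempty_iff_eq_empty]
      rintro ⟨J, hJ⟩
      have := (helem J hJ).2.2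
      omega
    have hlen : l.length = n := by omega
    rw [hAempty, hlen]
    simp
  · have hAne : A.Nonempty := by
      rw [Set.nonempty_iff_ne_empty]
      intro hne
      have hb := heven l A h
      rw [hne, sInf_empty, inf_top_eq] at hb
      have : finrank ℝ (interList l) = 0 := by rw [hb]; exact finrank_bot ℝ _
      omega
    obtain ⟨K, hKA⟩ := hAne
    obtain ⟨⟨e, he, hKeq⟩, hKW, hKrank⟩ := helem K hKA
    have hKint : K = interList (e :: l) := hKeq
    have hcons : IsERS E (e :: l) (evenRes A (interList (e :: l))) :=
      h.cons he (hKint ▸ hKA)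
    have hd' : finrank ℝ (interList (e :: l)) = d - 1 := by rw [← hKint]; omega
    have hih := ih (d - 1) (by omega) (e :: l) _ hcons hd'
    have hstar : ∀ K' ∈ A, K' ≠ K → ∀ K'' ∈ A, K'' ≠ K → K ⊓ K' ≤ K'' → K ⊓ K' = K ⊓ K'' := by
      intro K' hK' hne' K'' hK'' hne'' hle
      rcases eq_or_ne K' K'' with rfl | hne
      · rfl
      · obtain ⟨_, hK'W, hK'r⟩ := helem K' hK'
        obtain ⟨_, hK''W, hK''r⟩ := helem K'' hK''
        have h1 := finrank_inf_corank hKW hK'W (Ne.symm hne') hKrank hK'r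
        have h2 := finrank_inf_corank hKW hK''W (Ne.symm hne'') hKrank hK''r
        exact Submodule.eq_of_le_of_finrank_le (le_inf inf_le_left hle) (by omega)
    have hcount := count_evenRes A hfin K hKA hstar
    rw [← hKint] at hih
    rw [hcount]
    simp only [List.length_cons, Nat.cast_add, Nat.cast_one] at hih
    linear_combination hih

/-- If the arrangement given by `E` is even (every even restriction sequence has essential
associated arrangement), then it satisfies the parity condition `|H| ≡ n (mod 2)`. -/
theorem even_implies_parity {n : ℕ} (E : Finset (EuclideanSpace ℝ (Fin n)))
    (hunit : ∀ e ∈ E, ‖e‖ = 1) (hopp : ∀ e ∈ E, -e ∉ E)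
    (heven : ∀ l A, IsERS E l A → interList l ⊓ sInf A = ⊥) :
    E.card ≡ n [MOD 2] := by
  classical
  have h0 : IsERS E [] {H | ∃ e ∈ E, H = hyp e} := IsERS.nil
  have hk := key E hunit heven (finrank ℝ (interList ([] : List (EuclideanSpace ℝ (Fin n)))))
    [] _ h0 rfl
  have hinj : Set.InjOn hyp (E : Set (EuclideanSpace ℝ (Fin n))) := by
    intro e he e' he' hEq
    have h1 : (ℝ ∙ e) = (ℝ ∙ e') := by
      have := congrArg (fun p : Submodule ℝ (EuclideanSpace ℝ (Fin n)) => pᗮ) hEq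
      simpa [hyp, Submodule.orthogonal_orthogonal] using this
    have h2 : e ∈ (ℝ ∙ e') := h1 ▸ Submodule.mem_span_singleton_self e
    obtain ⟨c, hc⟩ := Submodule.mem_span_singleton.mp h2
    have hn : ‖e‖ = 1 := hunit e he
    have hn' : ‖e'‖ = 1 := hunit e' he'
    have habs : |c| = 1 := by
      rw [← hc, norm_smul, hn', Real.norm_eq_abs, mul_one] at hn
      exact hn
    rcases (abs_eq (by norm_num : (0:ℝ) ≤ 1)).mp habs with h1c | h1c
    · rw [h1c, one_smul] at hc; exact hc.symm
    · rw [h1c, neg_smul, one_smul] at hc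
      exact absurd (hc ▸ he) (hopp e' he')
  have hset : {H | ∃ e ∈ E, H = hyp e} = hyp '' (E : Set (EuclideanSpace ℝ (Fin n))) := by
    ext H
    constructor
    · rintro ⟨e, he, rfl⟩; exact ⟨e, he, rfl⟩
    · rintro ⟨e, he, rfl⟩; exact ⟨e, he, rfl⟩
  have hcard : {H | ∃ e ∈ E, H = hyp e}.ncard = E.card := by
    rw [hset, Set.ncard_image_of_injOn hinj, Set.ncard_coe_finset]
  rw [hcard] at hk
  simp only [List.length_nil, Nat.cast_zero, add_zero] at hk
  exact (ZMod.natCast_eq_natCast_iff _ _ _).mp hk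
end
end

section
/- Let H be the Coxeter arrangement of type A₁ⁿ in ℝⁿ, given by the coordinate hyperplanes {x_i = 0} for 1 ≤ i ≤ n, with base chamber the positive orthant. Let K be a measurable set of finite volume that is stable under all coordinate sign changes (i.e., under the group {±1}ⁿ acting by coordinatewise sign flips), and let a = (a₁,…,a_n) ∈ ℝⁿ be such that K contains the box [−|a₁|,|a₁|] × ⋯ × [−|a_n|,|a_n|]. Then P(H, K + a) = 2ⁿ · a₁ a₂ ⋯ a_n. -/
/-!
The signed sum is `∫_{K+a} ∏ sign xᵢ`, i.e. `∫_K ∏ sign (yᵢ + aᵢ)`. Averaging over the `2ⁿ`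
coordinate sign flips, which preserve `K`, replaces the integrand by
`2⁻ⁿ ∏ (sign (aᵢ + yᵢ) + sign (aᵢ - yᵢ))`. Off the null set where `|yᵢ| = |aᵢ|` for some `i`,
each factor is `2 sign aᵢ` when `|yᵢ| < |aᵢ|` and `0` otherwise, so the averaged integrand is
`∏ sign aᵢ` times the indicator of the box `∏ [-|aᵢ|, |aᵢ|] ⊆ K`, of volume `∏ 2 |aᵢ|`.
-/

open MeasureTheory

noncomputable section
attribute [local instance] Classical.propDecidable

/-- The open orthant of `ℝⁿ` determined by a sign vector `ε`; these are the chambers of the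
coordinate arrangement `A₁ⁿ`, the base chamber being the positive orthant (`ε ≡ true`). -/
def orthant {n : ℕ} (ε : Fin n → Bool) : Set (EuclideanSpace ℝ (Fin n)) :=
  {x | ∀ i, if ε i then 0 < x i else x i < 0}

lemma Real.measurable_sign : Measurable Real.sign :=
  Measurable.ite measurableSet_Iio measurable_const
    (Measurable.ite measurableSet_Ioi measurable_const measurable_const)

lemma Real.abs_sign_le_one (x : ℝ) : |Real.sign x| ≤ 1 := by
  rcases Real.sign_apply_eq x with h | h | h <;> simp [h]

lemma Real.sign_mul_abs (x : ℝ) : Real.sign x * |x| = x := by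
  rcases lt_trichotomy x 0 with h | rfl | h
  · rw [Real.sign_of_neg h, abs_of_neg h]; ring
  · simp
  · rw [Real.sign_of_pos h, abs_of_pos h]; ring

lemma Real.sign_add_of_abs_lt {a t : ℝ} (h : |t| < |a|) : Real.sign (a + t) = Real.sign a := by
  rcases lt_trichotomy a 0 with ha | rfl | ha
  · rw [abs_of_neg ha] at h
    rw [Real.sign_of_neg ha, Real.sign_of_neg (by linarith [le_abs_self t])]
  · exact absurd h (by simp)
  · rw [abs_of_pos ha] at h
    rw [Real.sign_of_pos ha, Real.sign_of_pos (by linarith [neg_abs_le t])]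

lemma Real.sign_add_add_sign_sub_of_abs_ne {a t : ℝ} (h : |t| ≠ |a|) :
    Real.sign (a + t) + Real.sign (a - t) = 2 * Real.sign a * if |t| ≤ |a| then 1 else 0 := by
  have habs_neg : |-t| = |t| := abs_neg t
  rcases lt_or_gt_of_ne h with h | h
  · rw [if_pos h.le, Real.sign_add_of_abs_lt h, sub_eq_add_neg,
      Real.sign_add_of_abs_lt (habs_neg.trans_lt h)]
    ring
  · rw [if_neg h.not_ge, add_comm a t, Real.sign_add_of_abs_lt h, sub_eq_neg_add,
      Real.sign_add_of_abs_lt (h.trans_eq habs_neg.symm), Real.sign_neg]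
    ring

lemma measurableSet_orthant {n : ℕ} (ε : Fin n → Bool) : MeasurableSet (orthant ε) := by
  simp only [orthant, Set.ofPred_forall]
  refine MeasurableSet.iInter fun i => ?_
  split_ifs
  · exact measurableSet_lt measurable_const (by fun_prop)
  · exact measurableSet_lt (by fun_prop) measurable_const

lemma neg_one_pow_card_filter_eq_false {n : ℕ} (ε : Fin n → Bool) :
    (-1 : ℝ) ^ (Finset.univ.filter (fun i => ε i = false)).card = ∏ i, if ε i then 1 else -1 := by
  rw [← Finset.prod_const, Finset.prod_filter]
  exact Finset.prod_congr rfl fun i _ => by cases ε i <;> simp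

lemma sum_neg_one_pow_mul_indicator_orthant {n : ℕ} (x : EuclideanSpace ℝ (Fin n)) :
    ∑ ε : Fin n → Bool, (-1 : ℝ) ^ (Finset.univ.filter (fun i => ε i = false)).card *
      (orthant ε).indicator 1 x = ∏ i, Real.sign (x i) := by
  have hcoord (t : ℝ) : ∑ b : Bool, (if b then (1 : ℝ) else -1) *
      (if (if b then 0 < t else t < 0) then 1 else 0) = Real.sign t := by
    rcases lt_trichotomy t 0 with h | rfl | h
    · simp [h, h.not_gt, Real.sign_of_neg h]
    · simp
    · simp [h, h.not_gt, Real.sign_of_pos h]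
  simp_rw [← hcoord, Fintype.prod_sum, neg_one_pow_card_filter_eq_false, Set.indicator_apply]
  refine Finset.sum_congr rfl fun ε _ => ?_
  rw [Finset.prod_mul_distrib, Fintype.prod_boole]
  congr 1
  simp only [orthant, Set.mem_ofPred_eq, Pi.one_apply]
  congr

lemma sum_neg_one_pow_mul_measure_inter_orthant {n : ℕ}
    (μ : Measure (EuclideanSpace ℝ (Fin n))) {A : Set (EuclideanSpace ℝ (Fin n))} (hA : μ A ≠ ⊤) :
    ∑ ε : Fin n → Bool, (-1 : ℝ) ^ (Finset.univ.filter (fun i => ε i = false)).card *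
      (μ (A ∩ orthant ε)).toReal = ∫ x in A, ∏ i, Real.sign (x i) ∂μ := by
  have hint (ε : Fin n → Bool) : IntegrableOn ((orthant ε).indicator 1) A μ :=
    (integrableOn_const (C := (1 : ℝ)) hA).indicator (measurableSet_orthant ε)
  simp_rw [← sum_neg_one_pow_mul_indicator_orthant]
  rw [integral_finsetSum _ fun ε _ => (hint ε).const_mul _]
  refine Finset.sum_congr rfl fun ε _ => ?_
  rw [integral_const_mul, integral_indicator_one (measurableSet_orthant ε),
    measureReal_restrict_apply (measurableSet_orthant ε), Set.inter_comm, measureReal_def]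

section SignFlip

variable {ι : Type*} [Fintype ι]

def signFlip (ε : ι → Bool) : EuclideanSpace ℝ ι ≃ₗᵢ[ℝ] EuclideanSpace ℝ ι :=
  LinearIsometryEquiv.piLpCongrRight 2 fun i =>
    if ε i then LinearIsometryEquiv.neg ℝ else LinearIsometryEquiv.refl ℝ ℝ

lemma signFlip_apply (ε : ι → Bool) (x : EuclideanSpace ℝ ι) :
    signFlip ε x = WithLp.toLp 2 (fun i => if ε i then -x i else x i) := by
  ext i
  by_cases h : ε i <;> simp [signFlip, h]

lemma setIntegral_sum_comp_signFlip {K : Set (EuclideanSpace ℝ ι)}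
    (hK : ∀ ε, signFlip ε '' K = K) {f : EuclideanSpace ℝ ι → ℝ} (hf : IntegrableOn f K) :
    ∫ y in K, ∑ ε : ι → Bool, f (signFlip ε y) = 2 ^ Fintype.card ι * ∫ y in K, f y := by
  have hflip (ε : ι → Bool) :=
    (signFlip ε).measurePreserving.setIntegral_image_emb
      (signFlip ε).toHomeomorph.measurableEmbedding f K
  have hint (ε : ι → Bool) : IntegrableOn (fun y => f (signFlip ε y)) K := by
    rw [← hK ε] at hf
    exact (signFlip ε).measurePreserving.integrableOn_image
      (signFlip ε).toHomeomorph.measurableEmbedding |>.mp hf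
  rw [integral_finsetSum _ fun ε _ => hint ε]
  simp_rw [← hflip, hK]
  simp

lemma sum_prod_sign_signFlip_add (a y : EuclideanSpace ℝ ι) :
    ∑ ε : ι → Bool, ∏ i, Real.sign (signFlip ε y i + a i) =
      ∏ i, (Real.sign (a i + y i) + Real.sign (a i - y i)) := by
  simp only [signFlip_apply, PiLp.toLp_apply]
  rw [← Fintype.prod_sum fun i (b : Bool) => Real.sign ((if b then -y i else y i) + a i)]
  simp [sub_eq_neg_add, add_comm]

end SignFlip

section Box

variable {ι : Type*} [Fintype ι]

lemma ae_abs_apply_ne (i : ι) (c : ℝ) : ∀ᵐ y : EuclideanSpace ℝ ι, |y i| ≠ |c| := by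
  have hne (x : ℝ) : ∀ᵐ y : EuclideanSpace ℝ ι, y i ≠ x :=
    (PiLp.volume_preserving_ofLp ι).quasiMeasurePreserving.ae (Measure.ae_eval_ne _ i x)
  filter_upwards [hne c, hne (-c)] with y h₁ h₂
  rw [Ne, abs_eq_abs]
  tauto

lemma volume_real_setOf_forall_abs_le (a : EuclideanSpace ℝ ι) :
    volume.real {x : EuclideanSpace ℝ ι | ∀ i, |x i| ≤ |a i|} = ∏ i, 2 * |a i| := by
  have hbox : {x : EuclideanSpace ℝ ι | ∀ i, |x i| ≤ |a i|} =
      WithLp.ofLp ⁻¹' Set.Icc (fun i => -|a i|) (fun i => |a i|) := by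
    ext x
    simp [abs_le, Pi.le_def, forall_and]
  rw [hbox, measureReal_def, (PiLp.volume_preserving_ofLp ι).measure_preimage
    measurableSet_Icc.nullMeasurableSet, Real.volume_Icc_pi_toReal (fun i => by simp)]
  simp [two_mul]

lemma setIntegral_prod_sign_add {K : Set (EuclideanSpace ℝ ι)}
    (hKvol : volume K ≠ ⊤) (hK : ∀ ε, signFlip ε '' K = K) {a : EuclideanSpace ℝ ι}
    (hbox : {x : EuclideanSpace ℝ ι | ∀ i, |x i| ≤ |a i|} ⊆ K) :
    ∫ y in K, ∏ i, Real.sign (y i + a i) = 2 ^ Fintype.card ι * ∏ i, a i := by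
  set box := {x : EuclideanSpace ℝ ι | ∀ i, |x i| ≤ |a i|}
  have hbox_meas : MeasurableSet box := by
    simp only [box, Set.ofPred_forall]
    exact .iInter fun i => measurableSet_le (by fun_prop) (by fun_prop)
  have hint : IntegrableOn (fun y => ∏ i, Real.sign (y i + a i)) K := by
    refine Measure.integrableOn_of_bounded (M := 1) hKvol ?_ (ae_of_all _ fun y => ?_)
    · exact (Finset.measurable_prod _ fun i _ =>
        Real.measurable_sign.comp (by fun_prop)).aestronglyMeasurable
    · rw [Real.norm_eq_abs, Finset.abs_prod]
      exact Finset.prod_le_one (fun _ _ => abs_nonneg _) fun _ _ => Real.abs_sign_le_one _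
  have hsym : ∀ᵐ y, ∑ ε : ι → Bool, ∏ i, Real.sign (signFlip ε y i + a i) =
      (2 ^ Fintype.card ι * ∏ i, Real.sign (a i)) * box.indicator 1 y := by
    filter_upwards [ae_all_iff.2 fun i => ae_abs_apply_ne i (a i)] with y hy
    rw [sum_prod_sign_signFlip_add, Finset.prod_congr rfl fun i _ =>
      Real.sign_add_add_sign_sub_of_abs_ne (hy i), Finset.prod_mul_distrib,
      Finset.prod_mul_distrib, Fintype.prod_boole]
    simp [Set.indicator_apply, box]
  have h := setIntegral_sum_comp_signFlip hK hint
  rw [integral_congr_ae (ae_restrict_of_ae hsym), integral_const_mul,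
    integral_indicator_one hbox_meas, measureReal_restrict_apply hbox_meas,
    Set.inter_eq_left.mpr hbox, volume_real_setOf_forall_abs_le] at h
  have hprod : (∏ i, Real.sign (a i)) * ∏ i, 2 * |a i| = 2 ^ Fintype.card ι * ∏ i, a i := by
    simp_rw [← Finset.prod_mul_distrib, mul_left_comm _ (2 : ℝ), Real.sign_mul_abs,
      Finset.prod_mul_distrib, Finset.prod_const, Finset.card_univ]
  rw [mul_assoc, hprod] at h
  exact mul_left_cancel₀ (by positivity) h.symm

end Box

theorem pizza_A1n_general {n : ℕ} (K : Set (EuclideanSpace ℝ (Fin n)))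
    (hKvol : volume K < ⊤)
    (hKstable : ∀ ε : Fin n → Bool,
      (fun x : EuclideanSpace ℝ (Fin n) =>
        (WithLp.toLp 2 (fun i => if ε i then -x i else x i) : EuclideanSpace ℝ (Fin n))) '' K = K)
    (a : EuclideanSpace ℝ (Fin n))
    (hbox : {x : EuclideanSpace ℝ (Fin n) | ∀ i, |x i| ≤ |a i|} ⊆ K) :
    ∑ ε : Fin n → Bool,
        (-1 : ℝ) ^ (Finset.univ.filter (fun i => ε i = false)).card *
          (volume (((fun x => x + a) '' K) ∩ orthant ε)).toReal
      = 2 ^ n * ∏ i, a i := by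
  have hstable (ε : Fin n → Bool) : signFlip ε '' K = K := by
    rw [show ⇑(signFlip ε) = _ from funext (signFlip_apply ε)]
    exact hKstable ε
  have hvol : volume ((fun x => x + a) '' K) ≠ ⊤ := by
    rwa [Set.image_add_right, measure_preimage_add_right, ← lt_top_iff_ne_top]
  rw [sum_neg_one_pow_mul_measure_inter_orthant volume hvol,
    (measurePreserving_add_right volume a).setIntegral_image_emb (measurableEmbedding_addRight a)]
  simpa using setIntegral_prod_sign_add hKvol.ne hstable hbox

/-- The Pizza theorem for the coordinate arrangement `A₁ⁿ` (hyperplanes `xᵢ = 0`, base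
chamber the positive orthant): if `K` is a measurable set of finite volume stable under all
coordinate sign changes and `K` contains the box `∏ [−|aᵢ|, |aᵢ|]`, then
`P(H, K + a) = 2ⁿ a₁ ⋯ a_n`. -/
theorem pizza_A1n {n : ℕ} (K : Set (EuclideanSpace ℝ (Fin n)))
    (hKmeas : MeasurableSet K) (hKvol : volume K < ⊤)
    (hKstable : ∀ ε : Fin n → Bool,
      (fun x : EuclideanSpace ℝ (Fin n) =>
        (WithLp.toLp 2 (fun i => if ε i then -x i else x i) : EuclideanSpace ℝ (Fin n))) '' K = K)
    (a : EuclideanSpace ℝ (Fin n))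
    (hbox : {x : EuclideanSpace ℝ (Fin n) | ∀ i, |x i| ≤ |a i|} ⊆ K) :
    ∑ ε : Fin n → Bool,
        (-1 : ℝ) ^ (Finset.univ.filter (fun i => ε i = false)).card *
          (volume (((fun x => x + a) '' K) ∩ orthant ε)).toReal
      = 2 ^ n * ∏ i, a i :=
  pizza_A1n_general K hKvol hKstable a hbox
end
end
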